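/- arXiv:1211.1306 — 6 statements merged into one kernel-verified Lean document; each statement's English description precedes it below -/
import Mathlib

section
/- Every bipartite multigraph in which every vertex has maximum degree at most 3, where each edge e is assigned a permutation r_e of {0,1,2,3}, admits a 4-colouring f : E → {0,1,2,3} such that for any two distinct edges e, g sharing an endvertex in the class A, f(e) ≠ f(g), and for any two distinct edges e, g sharing an endvertex in the class B, r_e(f(e)) ≠ r_g(f(g)). -/
/-!
An edge conflicts with at most two edges at each of its ends, so an edge with an end of degree
at most two can be coloured last, and the components of the multigraph can be coloured
separately. What remains is a connected cubic multigraph, where we argue as in Brooks' theorem: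
take an edge `e₀ = ab` without parallel edges, an edge `u ≠ e₀` at `a` and an edge `w ≠ e₀` at
`b`, and colour `u` and `w` so that they forbid the same colour for `e₀`. The other edges can then
be coloured greedily, ending with `e₀`, unless some set `S` of them avoiding `e₀` has all its
neighbours in `S ∪ {u, w}`. Counting the ends of the edges of `S` in `A` and in `B` modulo 3 shows
that this cannot happen for both choices of `u`. The triple edge, the only connected cubic
multigraph in which every edge has a parallel one, is coloured by hand.
-/

open Finset Function

namespace DistortionColoring

section Coloring

variable {A B E α : Type*} (ea : E → A) (eb : E → B) (r : E → Equiv.Perm α)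

def IsProperOn (T : Finset E) (f : E → α) : Prop :=
  ∀ e ∈ T, ∀ g ∈ T, e ≠ g → (ea e = ea g → f e ≠ f g) ∧ (eb e = eb g → r e (f e) ≠ r g (f g))

def IsSealed (T P S : Finset E) : Prop :=
  ∀ x ∈ S, ∀ y ∈ T, (ea y = ea x ∨ eb y = eb x) → y ∈ S ∨ y ∈ P

def IsConnectedOn (T : Finset E) : Prop :=
  ∀ S ⊆ T, S.Nonempty → IsSealed ea eb T ∅ S → S = T

variable [DecidableEq E]

theorem IsProperOn.piecewise {T S : Finset E} {f g : E → α} (hS : IsSealed ea eb T ∅ S)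
    (hf : IsProperOn ea eb r S f) (hg : IsProperOn ea eb r (T \ S) g) :
    IsProperOn ea eb r T (S.piecewise f g) := by
  have apart : ∀ x ∈ S, ∀ y ∈ T, y ∉ S → ea x ≠ ea y ∧ eb x ≠ eb y := fun x hx y hy hyS =>
    ⟨fun h => by simpa [hyS] using hS x hx y hy (.inl h.symm),
      fun h => by simpa [hyS] using hS x hx y hy (.inr h.symm)⟩
  intro x hx y hy hxy
  by_cases hxS : x ∈ S <;> by_cases hyS : y ∈ S
  · simpa [hxS, hyS] using hf x hxS y hyS hxy
  · exact ⟨fun h => absurd h (apart x hxS y hy hyS).1, fun h => absurd h (apart x hxS y hy hyS).2⟩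
  · exact ⟨fun h => absurd h.symm (apart y hyS x hx hxS).1,
      fun h => absurd h.symm (apart y hyS x hx hxS).2⟩
  · simpa [hxS, hyS] using hg x (mem_sdiff.2 ⟨hx, hxS⟩) y (mem_sdiff.2 ⟨hy, hyS⟩) hxy

variable [DecidableEq A] [DecidableEq B] [DecidableEq α]

def forbidden (Q : Finset E) (f : E → α) (e : E) : Finset α :=
  ((Q.filter (ea · = ea e)).erase e).image f ∪
    ((Q.filter (eb · = eb e)).erase e).image fun g => (r e).symm (r g (f g))

theorem card_forbidden_le (Q : Finset E) (f : E → α) (e : E) :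
    #(forbidden ea eb r Q f e) ≤
      #((Q.filter (ea · = ea e)).erase e) + #((Q.filter (eb · = eb e)).erase e) :=
  (card_union_le _ _).trans (add_le_add card_image_le card_image_le)

theorem isProperOn_update {Q : Finset E} {f : E → α} {e : E} {c : α}
    (hf : IsProperOn ea eb r (Q.erase e) f) (hc : c ∉ forbidden ea eb r Q f e) :
    IsProperOn ea eb r Q (update f e c) := by
  have key : ∀ g ∈ Q, g ≠ e →
      (ea g = ea e → f g ≠ c) ∧ (eb g = eb e → r g (f g) ≠ r e c) := by
    refine fun g hg hge => ⟨fun h hfc => hc ?_, fun h hrc => hc ?_⟩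
    · exact mem_union_left _ (mem_image.2 ⟨g, by simp [hg, hge, h], hfc⟩)
    · refine mem_union_right _ (mem_image.2 ⟨g, by simp [hg, hge, h], ?_⟩)
      rw [hrc, Equiv.symm_apply_apply]
  intro x hx y hy hxy
  rcases eq_or_ne x e with rfl | hxe
  · simp only [update_self, update_of_ne hxy.symm]
    exact ⟨fun h => (key y hy hxy.symm).1 h.symm |>.symm,
      fun h => (key y hy hxy.symm).2 h.symm |>.symm⟩
  rcases eq_or_ne y e with rfl | hye
  · simp only [update_self, update_of_ne hxe]
    exact key x hx hxe
  simp only [update_of_ne hxe, update_of_ne hye]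
  exact hf x (mem_erase.2 ⟨hxe, hx⟩) y (mem_erase.2 ⟨hye, hy⟩) hxy

variable [Fintype α]

theorem exists_isProperOn_update {Q : Finset E} {f : E → α} {e : E}
    (hf : IsProperOn ea eb r (Q.erase e) f) (hcard : #(forbidden ea eb r Q f e) < Fintype.card α) :
    ∃ c, IsProperOn ea eb r Q (update f e c) := by
  obtain ⟨c, -, hc⟩ := exists_mem_notMem_of_card_lt_card (t := univ) hcard
  exact ⟨c, isProperOn_update ea eb r hf hc⟩

theorem exists_isProperOn_union {P : Finset E} {f₀ : E → α} (h₀ : IsProperOn ea eb r P f₀)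
    (R : Finset E) (hPR : Disjoint P R)
    (hR : ∀ S ⊆ R, S.Nonempty → ∃ x ∈ S, ∀ f : E → α, (∀ e ∈ P, f e = f₀ e) →
      #(forbidden ea eb r (P ∪ S) f x) < Fintype.card α) :
    ∃ f, IsProperOn ea eb r (P ∪ R) f ∧ ∀ e ∈ P, f e = f₀ e := by
  induction R using Finset.strongInduction with
  | H R ih =>
  rcases R.eq_empty_or_nonempty with rfl | hne
  · exact ⟨f₀, by simpa using h₀, fun _ _ => rfl⟩
  obtain ⟨x, hx, hxf⟩ := hR R subset_rfl hne
  have hxP : x ∉ P := disjoint_right.1 hPR hx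
  obtain ⟨f, hf, hfP⟩ := ih (R.erase x) (erase_ssubset hx)
    (disjoint_of_subset_right (erase_subset _ _) hPR)
    (fun S hS => hR S (hS.trans (erase_subset _ _)))
  have herase : (P ∪ R).erase x = P ∪ R.erase x := by
    rw [erase_union_distrib, erase_eq_of_notMem hxP]
  obtain ⟨c, hc⟩ := exists_isProperOn_update ea eb r (herase ▸ hf) (hxf f hfP)
  refine ⟨update f x c, hc, fun e he => ?_⟩
  rw [update_of_ne (ne_of_mem_of_not_mem he hxP), hfP e he]

end Coloring

section Counting

variable {E V : Type*} [DecidableEq E] [DecidableEq V]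

theorem mul_card_image_eq (φ : E → V) {T S P : Finset E} {d : ℕ}
    (hreg : ∀ x ∈ T, #(T.filter (φ · = φ x)) = d) (hST : S ⊆ T) (hPT : P ⊆ T)
    (hSP : Disjoint S P) (hsealed : ∀ x ∈ S, ∀ y ∈ T, φ y = φ x → y ∈ S ∨ y ∈ P) :
    d * #(S.image φ) = #S + #(P.filter (φ · ∈ S.image φ)) := by
  set U := T.filter (φ · ∈ S.image φ)
  have hU : U = S ∪ P.filter (φ · ∈ S.image φ) := by
    ext y
    simp only [U, mem_filter, mem_union, mem_image]
    constructor
    · rintro ⟨hy, x, hx, hxy⟩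
      exact (hsealed x hx y hy hxy.symm).imp id fun h => ⟨h, x, hx, hxy⟩
    · rintro (hy | ⟨hy, h⟩)
      exacts [⟨hST hy, y, hy, rfl⟩, ⟨hPT hy, h⟩]
  have hfib : #U = ∑ v ∈ S.image φ, #(U.filter (φ · = v)) :=
    card_eq_sum_card_fiberwise fun y hy => (mem_filter.1 hy).2
  rw [← card_union_of_disjoint (hSP.mono_right (filter_subset _ _)), ← hU, hfib,
    sum_congr rfl fun v hv => ?_, sum_const, smul_eq_mul, mul_comm]
  obtain ⟨x, hx, rfl⟩ := mem_image.1 hv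
  rw [← hreg x (hST hx), filter_filter]
  exact congrArg card (filter_congr fun y _ => and_iff_right_of_imp fun h => h ▸ hv)

end Counting

/-- With `c₁ = p₁⁻¹ s` and `c₂ = p₃⁻¹ s`, the constraints `c₃ ≠ c₂` and `p₃ c₃ ≠ p₁ c₁` coincide,
so only three colours are excluded for `c₃`. -/
theorem exists_transversal_of_ne {p₁ p₂ p₃ : Equiv.Perm (Fin 4)} {s : Fin 4}
    (h₁ : p₃.symm s ≠ p₁.symm s) (h₂ : p₃.symm s ≠ p₂.symm s) :
    ∃ c₁ c₂ c₃ : Fin 4, c₁ ≠ c₂ ∧ c₁ ≠ c₃ ∧ c₂ ≠ c₃ ∧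
      p₁ c₁ ≠ p₂ c₂ ∧ p₁ c₁ ≠ p₃ c₃ ∧ p₂ c₂ ≠ p₃ c₃ := by
  obtain ⟨c₃, -, hc₃⟩ := exists_mem_notMem_of_card_lt_card (t := univ)
    (s := {p₁.symm s, p₃.symm s, p₃.symm (p₂ (p₃.symm s))})
    ((card_le_three).trans_lt (by simp))
  simp only [mem_insert, mem_singleton, not_or] at hc₃
  obtain ⟨h₁₃, h₂₃, h₃⟩ := hc₃
  refine ⟨p₁.symm s, p₃.symm s, c₃, h₁.symm, Ne.symm h₁₃, Ne.symm h₂₃, ?_, ?_, ?_⟩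
  · rw [Equiv.apply_symm_apply]
    exact fun h => h₂ ((Equiv.eq_symm_apply p₂).2 h.symm)
  · rw [Equiv.apply_symm_apply]
    exact fun h => h₂₃ ((Equiv.eq_symm_apply p₃).2 h.symm)
  · exact fun h => h₃ ((Equiv.eq_symm_apply p₃).2 h.symm)

theorem exists_transversal (p₁ p₂ p₃ : Equiv.Perm (Fin 4)) :
    ∃ c₁ c₂ c₃ : Fin 4, c₁ ≠ c₂ ∧ c₁ ≠ c₃ ∧ c₂ ≠ c₃ ∧
      p₁ c₁ ≠ p₂ c₂ ∧ p₁ c₁ ≠ p₃ c₃ ∧ p₂ c₂ ≠ p₃ c₃ := by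
  by_cases h₃ : ∃ s, p₃.symm s ≠ p₁.symm s ∧ p₃.symm s ≠ p₂.symm s
  · obtain ⟨s, h₁, h₂⟩ := h₃
    exact exists_transversal_of_ne h₁ h₂
  by_cases h₁ : ∃ s, p₁.symm s ≠ p₂.symm s ∧ p₁.symm s ≠ p₃.symm s
  · obtain ⟨s, h₁, h₂⟩ := h₁
    obtain ⟨c₂, c₃, c₁, h⟩ := exists_transversal_of_ne h₁ h₂
    exact ⟨c₁, c₂, c₃, by grind⟩
  by_cases h₂ : ∃ s, p₂.symm s ≠ p₁.symm s ∧ p₂.symm s ≠ p₃.symm s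
  · obtain ⟨s, h₁, h₂⟩ := h₂
    obtain ⟨c₁, c₃, c₂, h⟩ := exists_transversal_of_ne h₁ h₂
    exact ⟨c₁, c₂, c₃, by grind⟩
  push Not at h₁ h₂ h₃
  have heq : ∀ c, p₂ c = p₁ c ∧ p₃ c = p₁ c := fun c => by
    have := h₁ (p₁ c)
    have := h₂ (p₁ c)
    have := h₃ (p₁ c)
    rw [Equiv.symm_apply_apply] at *
    refine ⟨?_, ?_⟩ <;> rw [← Equiv.symm_apply_eq] <;> grind
  refine ⟨0, 1, 2, by decide, by decide, by decide, ?_, ?_, ?_⟩ <;>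
    simp only [(heq _).1, (heq _).2, ne_eq, EmbeddingLike.apply_eq_iff_eq] <;> decide

section Cubic

variable {A B E : Type*} [DecidableEq E] (ea : E → A) (eb : E → B) (r : E → Equiv.Perm (Fin 4))

/-- An obstruction to extending greedily a colouring of `{u, w}` to the rest of `T`. -/
structure IsBlocking (T : Finset E) (e₀ u w : E) (S : Finset E) : Prop where
  nonempty : S.Nonempty
  subset : S ⊆ T \ {u, w}
  not_mem : e₀ ∉ S
  sealed : IsSealed ea eb T {u, w} S

variable {ea eb}

theorem IsBlocking.ne_ends {T S : Finset E} {e₀ u w : E} (hS : IsBlocking ea eb T e₀ u w S)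
    (he₀ : e₀ ∈ T) (hue : u ≠ e₀) (hwe : w ≠ e₀) {x : E} (hx : x ∈ S) :
    ea x ≠ ea e₀ ∧ eb x ≠ eb e₀ := by
  have key : ¬(ea e₀ = ea x ∨ eb e₀ = eb x) := fun h => by
    rcases hS.sealed x hx e₀ he₀ h with h | h
    · exact hS.not_mem h
    · simp only [mem_insert, mem_singleton] at h
      exact h.elim (fun h => hue h.symm) fun h => hwe h.symm
  exact ⟨fun h => key (.inl h.symm), fun h => key (.inr h.symm)⟩

theorem exists_isProperOn_of_card_eq_three {T : Finset E} (hT : #T = 3) :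
    ∃ f, IsProperOn ea eb r T f := by
  obtain ⟨e₁, e₂, e₃, h₁₂, h₁₃, h₂₃, rfl⟩ := card_eq_three.1 hT
  obtain ⟨c₁, c₂, c₃, h⟩ := exists_transversal (r e₁) (r e₂) (r e₃)
  refine ⟨fun e => if e = e₁ then c₁ else if e = e₂ then c₂ else c₃, fun x hx y hy hxy => ?_⟩
  simp only [mem_insert, mem_singleton] at hx hy
  rcases hx with rfl | rfl | rfl <;> rcases hy with rfl | rfl | rfl <;>
    simp_all [eq_comm]

variable (ea eb) [DecidableEq A] [DecidableEq B]

def IsCubicOn (T : Finset E) : Prop :=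
  ∀ x ∈ T, #(T.filter (ea · = ea x)) = 3 ∧ #(T.filter (eb · = eb x)) = 3

variable {ea eb}

theorem IsCubicOn.card_erase {T : Finset E} (hT : IsCubicOn ea eb T) {x : E} (hx : x ∈ T) :
    #((T.filter (ea · = ea x)).erase x) = 2 ∧ #((T.filter (eb · = eb x)).erase x) = 2 := by
  rw [card_erase_of_mem (by simp [hx]), card_erase_of_mem (by simp [hx]), (hT x hx).1,
    (hT x hx).2]
  exact ⟨rfl, rfl⟩

theorem mem_of_four_le_card_forbidden {T Q : Finset E} {f : E → Fin 4} {x y : E}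
    (hT : IsCubicOn ea eb T) (hx : x ∈ T) (hQ : Q ⊆ T)
    (h : 4 ≤ #(forbidden ea eb r Q f x)) (hy : y ∈ T) (hyx : y ≠ x)
    (hmeet : ea y = ea x ∨ eb y = eb x) : y ∈ Q := by
  have hsubA : (Q.filter (ea · = ea x)).erase x ⊆ (T.filter (ea · = ea x)).erase x :=
    erase_subset_erase _ (filter_subset_filter _ hQ)
  have hsubB : (Q.filter (eb · = eb x)).erase x ⊆ (T.filter (eb · = eb x)).erase x :=
    erase_subset_erase _ (filter_subset_filter _ hQ)
  have hle := card_forbidden_le ea eb r Q f x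
  have h₁ := card_le_card hsubA
  have h₂ := card_le_card hsubB
  obtain ⟨hA, hB⟩ := hT.card_erase hx
  rcases hmeet with hmeet | hmeet
  · have hy' : y ∈ (Q.filter (ea · = ea x)).erase x := by
      rw [eq_of_subset_of_card_le hsubA (by omega)]; simp [hy, hyx, hmeet]
    exact (mem_filter.1 (mem_of_mem_erase hy')).1
  · have hy' : y ∈ (Q.filter (eb · = eb x)).erase x := by
      rw [eq_of_subset_of_card_le hsubB (by omega)]; simp [hy, hyx, hmeet]
    exact (mem_filter.1 (mem_of_mem_erase hy')).1

theorem card_forbidden_lt_of_eq {T Q : Finset E} {f : E → Fin 4} {e u w : E}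
    (hT : IsCubicOn ea eb T) (he : e ∈ T) (hQ : Q ⊆ T) (hu : u ∈ Q) (hue : u ≠ e)
    (hua : ea u = ea e) (hw : w ∈ Q) (hwe : w ≠ e) (hwb : eb w = eb e)
    (hf : f u = (r e).symm (r w (f w))) : #(forbidden ea eb r Q f e) < 4 := by
  set X := ((Q.filter (ea · = ea e)).erase e).image f
  set Y := ((Q.filter (eb · = eb e)).erase e).image fun g => (r e).symm (r g (f g))
  obtain ⟨hA, hB⟩ := hT.card_erase he
  have hX : #X ≤ 2 := card_image_le.trans
    ((card_le_card (erase_subset_erase _ (filter_subset_filter _ hQ))).trans hA.le)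
  have hY : #Y ≤ 2 := card_image_le.trans
    ((card_le_card (erase_subset_erase _ (filter_subset_filter _ hQ))).trans hB.le)
  have hXY : (X ∩ Y).Nonempty :=
    ⟨f u, mem_inter.2 ⟨mem_image_of_mem _ (by simp [hu, hue, hua]),
      mem_image.2 ⟨w, by simp [hw, hwe, hwb], hf.symm⟩⟩⟩
  have := card_union_add_card_inter X Y
  have := hXY.card_pos
  change #(X ∪ Y) < 4
  omega

theorem exists_isProperOn_or_isBlocking {T : Finset E} {e₀ u w : E} (hT : IsCubicOn ea eb T)
    (he₀ : e₀ ∈ T) (hu : u ∈ T) (hue : u ≠ e₀) (hua : ea u = ea e₀)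
    (hw : w ∈ T) (hwe : w ≠ e₀) (hwb : eb w = eb e₀) (hA : ea u ≠ ea w) (hB : eb u ≠ eb w) :
    (∃ f, IsProperOn ea eb r T f) ∨ ∃ S, IsBlocking ea eb T e₀ u w S := by
  have huw : u ≠ w := fun h => hA (congrArg ea h)
  set f₀ : E → Fin 4 := fun e => if e = w then 0 else (r e₀).symm (r w 0)
  have hP : IsProperOn ea eb r {u, w} f₀ := by
    intro x hx y hy hxy
    simp only [mem_insert, mem_singleton] at hx hy
    rcases hx with rfl | rfl <;> rcases hy with rfl | rfl
    · exact absurd rfl hxy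
    · exact ⟨fun h => absurd h hA, fun h => absurd h hB⟩
    · exact ⟨fun h => absurd h.symm hA, fun h => absurd h.symm hB⟩
    · exact absurd rfl hxy
  have hPT : {u, w} ⊆ T := by simp [insert_subset_iff, hu, hw]
  by_cases hG : ∀ S ⊆ T \ {u, w}, S.Nonempty → ∃ x ∈ S, ∀ f : E → Fin 4,
      (∀ e ∈ ({u, w} : Finset E), f e = f₀ e) →
      #(forbidden ea eb r ({u, w} ∪ S) f x) < Fintype.card (Fin 4)
  · obtain ⟨f, hf, -⟩ := exists_isProperOn_union ea eb r hP (T \ {u, w}) disjoint_sdiff hG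
    exact .inl ⟨f, union_sdiff_of_subset hPT ▸ hf⟩
  push Not at hG
  obtain ⟨S, hSR, hSne, hbad⟩ := hG
  simp only [Fintype.card_fin] at hbad
  have hQ : {u, w} ∪ S ⊆ T := union_subset hPT (hSR.trans sdiff_subset)
  refine .inr ⟨S, hSne, hSR, fun he₀S => ?_, fun x hx y hy hmeet => ?_⟩
  · obtain ⟨f, hfP, hcard⟩ := hbad e₀ he₀S
    have hfu : f u = (r e₀).symm (r w (f w)) := by
      rw [hfP u (by simp), hfP w (by simp)]
      simp [f₀, huw]
    exact (card_forbidden_lt_of_eq r hT he₀ hQ (by simp) hue hua (by simp) hwe hwb hfu).not_ge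
      hcard
  · rcases eq_or_ne y x with rfl | hyx
    · exact .inl hx
    obtain ⟨f, -, hcard⟩ := hbad x hx
    have := mem_of_four_le_card_forbidden r hT (hSR.trans sdiff_subset hx) hQ hcard hy hyx hmeet
    rw [mem_union] at this
    exact this.symm

/-- Otherwise counting the ends of the edges of `S` in `A` and in `B` shows that `S` is not
joined to the rest of `T` at all. -/
theorem IsBlocking.exists_ea_eq {T S : Finset E} {e₀ u w : E}
    (hS : IsBlocking ea eb T e₀ u w S) (hT : IsCubicOn ea eb T)
    (hconn : IsConnectedOn ea eb T) (he₀ : e₀ ∈ T)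
    (hu : u ∈ T) (hue : u ≠ e₀) (hua : ea u = ea e₀)
    (hw : w ∈ T) (hwe : w ≠ e₀) (hwb : eb w = eb e₀) : ∃ x ∈ S, ea x = ea w := by
  by_contra hno
  push Not at hno
  have hST : S ⊆ T := hS.subset.trans sdiff_subset
  have hPT : {u, w} ⊆ T := by simp [insert_subset_iff, hu, hw]
  have hSP : Disjoint S {u, w} := disjoint_of_subset_left hS.subset sdiff_disjoint
  have hcA := mul_card_image_eq ea (fun x hx => (hT x hx).1) hST hPT hSP
    fun x hx y hy h => hS.sealed x hx y hy (.inl h)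
  have hcB := mul_card_image_eq eb (fun x hx => (hT x hx).2) hST hPT hSP
    fun x hx y hy h => hS.sealed x hx y hy (.inr h)
  have hfA : ({u, w} : Finset E).filter (ea · ∈ S.image ea) = ∅ := by
    refine filter_eq_empty_iff.2 fun y hy h => ?_
    obtain ⟨x, hx, hxy⟩ := mem_image.1 h
    rcases mem_insert.1 hy with rfl | hy
    · exact (hS.ne_ends he₀ hue hwe hx).1 (hxy.trans hua)
    · exact hno x hx (hxy.trans (congrArg ea (mem_singleton.1 hy)))
  have hfB : ({u, w} : Finset E).filter (eb · ∈ S.image eb) ⊆ {u} := by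
    intro y hy
    obtain ⟨hy, x, hx, hxy⟩ := by simpa only [mem_filter, mem_image] using hy
    rcases mem_insert.1 hy with rfl | hy
    · exact mem_singleton_self _
    · rw [mem_singleton.1 hy] at hxy
      exact absurd (hxy.trans hwb) (hS.ne_ends he₀ hue hwe hx).2
  have hu' : eb u ∉ S.image eb := by
    intro h
    have h₁ : u ∈ ({u, w} : Finset E).filter (eb · ∈ S.image eb) :=
      mem_filter.2 ⟨mem_insert_self _ _, h⟩
    have := card_le_card hfB
    have := card_pos.2 ⟨u, h₁⟩
    rw [hfA, card_empty] at hcA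
    rw [card_singleton] at *
    omega
  have hclosed : IsSealed ea eb T ∅ S := fun x hx y hy hmeet => by
    rcases hS.sealed x hx y hy hmeet with h | h
    · exact .inl h
    rcases mem_insert.1 h with rfl | h
    · rcases hmeet with h | h
      · exact absurd (h.symm.trans hua) (hS.ne_ends he₀ hue hwe hx).1
      · exact absurd (mem_image.2 ⟨x, hx, h.symm⟩) hu'
    · rw [mem_singleton.1 h] at hmeet
      rcases hmeet with h | h
      · exact absurd h.symm (hno x hx)
      · exact absurd (h.symm.trans hwb) (hS.ne_ends he₀ hue hwe hx).2
  exact hS.not_mem (hconn S hST hS.nonempty hclosed ▸ he₀)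

/-- The two blocking sets would meet in a nonempty set whose only neighbour outside it is `w`,
at its `A`-end; counting the ends of its edges in `A` and in `B` then gives `3 ∣ 1`. -/
theorem not_isBlocking_and_isBlocking {T S₁ S₂ : Finset E} {e₀ u₁ u₂ w : E}
    (hT : IsCubicOn ea eb T) (hconn : IsConnectedOn ea eb T) (he₀ : e₀ ∈ T)
    (hu₁ : u₁ ∈ T) (hue₁ : u₁ ≠ e₀) (hua₁ : ea u₁ = ea e₀)
    (hu₂ : u₂ ∈ T) (hue₂ : u₂ ≠ e₀) (hua₂ : ea u₂ = ea e₀) (hu₁₂ : u₁ ≠ u₂)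
    (hw : w ∈ T) (hwe : w ≠ e₀) (hwb : eb w = eb e₀)
    (hS₁ : IsBlocking ea eb T e₀ u₁ w S₁) (hS₂ : IsBlocking ea eb T e₀ u₂ w S₂) : False := by
  have n₁ : u₁ ∉ S₂ := fun h => (hS₂.ne_ends he₀ hue₂ hwe h).1 hua₁
  have n₂ : u₂ ∉ S₁ := fun h => (hS₁.ne_ends he₀ hue₁ hwe h).1 hua₂
  have hwS₁ : w ∉ S₁ := fun h => by simpa using hS₁.subset h
  obtain ⟨x₁, hx₁, hx₁w⟩ := hS₁.exists_ea_eq hT hconn he₀ hu₁ hue₁ hua₁ hw hwe hwb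
  obtain ⟨x₂, hx₂, hx₂w⟩ := hS₂.exists_ea_eq hT hconn he₀ hu₂ hue₂ hua₂ hw hwe hwb
  have hS₁T : S₁ ⊆ T := hS₁.subset.trans sdiff_subset
  have hx₁S₂ : x₁ ∈ S₂ := by
    rcases hS₂.sealed x₂ hx₂ x₁ (hS₁T hx₁) (.inl (hx₁w.trans hx₂w.symm)) with h | h
    · exact h
    rcases mem_insert.1 h with rfl | h
    · exact absurd hx₁ n₂
    · exact absurd (mem_singleton.1 h ▸ hx₁) hwS₁
  set S := S₁ ∩ S₂
  have hsealed : IsSealed ea eb T {w} S := fun x hx y hy hmeet => by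
    rcases eq_or_ne y w with rfl | hyw
    · exact .inr (mem_singleton_self _)
    have h₁ := hS₁.sealed x (mem_inter.1 hx).1 y hy hmeet
    have h₂ := hS₂.sealed x (mem_inter.1 hx).2 y hy hmeet
    simp only [mem_insert, mem_singleton, hyw, or_false] at h₁ h₂
    rcases h₁ with h₁ | rfl
    · rcases h₂ with h₂ | rfl
      · exact .inl (mem_inter.2 ⟨h₁, h₂⟩)
      · exact absurd h₁ n₂
    · exact h₂.elim (fun h => absurd h n₁) fun h => absurd h hu₁₂
  have hST : S ⊆ T := inter_subset_left.trans hS₁T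
  have hPT : {w} ⊆ T := singleton_subset_iff.2 hw
  have hSP : Disjoint S {w} := disjoint_singleton_right.2 fun h => hwS₁ (mem_inter.1 h).1
  have hcA := mul_card_image_eq ea (fun x hx => (hT x hx).1) hST hPT hSP
    fun x hx y hy h => hsealed x hx y hy (.inl h)
  have hcB := mul_card_image_eq eb (fun x hx => (hT x hx).2) hST hPT hSP
    fun x hx y hy h => hsealed x hx y hy (.inr h)
  rw [filter_singleton, if_pos (mem_image.2 ⟨x₁, mem_inter.2 ⟨hx₁, hx₁S₂⟩, hx₁w⟩),
    card_singleton] at hcA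
  rw [filter_singleton, if_neg fun h => ?_, card_empty] at hcB
  · omega
  obtain ⟨x, hx, hxw⟩ := mem_image.1 h
  exact (hS₁.ne_ends he₀ hue₁ hwe (mem_inter.1 hx).1).2 (hxw.trans hwb)

theorem exists_isProperOn_of_simple {T : Finset E} {e₀ : E} (hT : IsCubicOn ea eb T)
    (hconn : IsConnectedOn ea eb T) (he₀ : e₀ ∈ T)
    (hsimple : ∀ y ∈ T, ea y = ea e₀ → eb y = eb e₀ → y = e₀) :
    ∃ f, IsProperOn ea eb r T f := by
  obtain ⟨hA, hB⟩ := hT.card_erase he₀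
  obtain ⟨u₁, u₂, hu₁₂, hu⟩ := card_eq_two.1 hA
  obtain ⟨w, hw⟩ := card_pos.1 (hB ▸ two_pos)
  simp only [mem_erase, mem_filter] at hw
  obtain ⟨hwe, hwT, hwb⟩ := hw
  have hwa : ea w ≠ ea e₀ := fun h => hwe (hsimple w hwT h hwb)
  have hmem : ∀ u ∈ (T.filter (ea · = ea e₀)).erase e₀, (∃ f, IsProperOn ea eb r T f) ∨
      ∃ S, IsBlocking ea eb T e₀ u w S := by
    intro u hu
    simp only [mem_erase, mem_filter] at hu
    obtain ⟨hue, huT, hua⟩ := hu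
    exact exists_isProperOn_or_isBlocking r hT he₀ huT hue hua hwT hwe hwb
      (hua ▸ hwa.symm) fun h => hue (hsimple u huT hua (h.trans hwb))
  have hu₁ : u₁ ∈ (T.filter (ea · = ea e₀)).erase e₀ := hu ▸ mem_insert_self _ _
  have hu₂ : u₂ ∈ (T.filter (ea · = ea e₀)).erase e₀ := hu ▸ by simp
  rcases hmem u₁ hu₁ with h | ⟨S₁, hS₁⟩
  · exact h
  rcases hmem u₂ hu₂ with h | ⟨S₂, hS₂⟩
  · exact h
  simp only [mem_erase, mem_filter] at hu₁ hu₂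
  exact (not_isBlocking_and_isBlocking hT hconn he₀ hu₁.2.1 hu₁.1 hu₁.2.2 hu₂.2.1 hu₂.1
    hu₂.2.2 hu₁₂ hwT hwe hwb hS₁ hS₂).elim

theorem exists_simple_or_parallel {T : Finset E} (hT : IsCubicOn ea eb T) {e : E} (he : e ∈ T) :
    (∃ e₀ ∈ T, ∀ y ∈ T, ea y = ea e₀ → eb y = eb e₀ → y = e₀) ∨
      ∀ y ∈ T, ea y = ea e → eb y = eb e := by
  by_contra h
  push Not at h
  obtain ⟨hpar, z, hz, hza, hzb⟩ := h
  obtain ⟨e', he', he'a, he'b, he'e⟩ := hpar e he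
  obtain ⟨z', hz', hz'a, hz'b, hz'z⟩ := hpar z hz
  have hsub : {e, e', z, z'} ⊆ T.filter (ea · = ea e) := by
    simp [insert_subset_iff, he, he', hz, hz', he'a, hza, hz'a.trans hza]
  have hcard : #({e, e', z, z'} : Finset E) = 4 := by
    have : e ≠ z := fun h => hzb (h ▸ rfl)
    rw [card_insert_of_notMem, card_insert_of_notMem, card_pair hz'z.symm] <;>
      grind
  have := card_le_card hsub
  rw [hcard, (hT e he).1] at this
  omega

theorem exists_isProperOn_of_isCubicOn {T : Finset E} (hT : IsCubicOn ea eb T)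
    (hconn : IsConnectedOn ea eb T) :
    ∃ f, IsProperOn ea eb r T f := by
  rcases T.eq_empty_or_nonempty with rfl | ⟨e, he⟩
  · exact ⟨fun _ => 0, fun x hx => absurd hx (notMem_empty x)⟩
  rcases exists_simple_or_parallel hT he with ⟨e₀, he₀, hsimple⟩ | hpar
  · exact exists_isProperOn_of_simple r hT hconn he₀ hsimple
  set F := T.filter (ea · = ea e)
  have hFB : F = T.filter (eb · = eb e) :=
    eq_of_subset_of_card_le (fun y hy => by simp_all [F]) (by rw [(hT e he).1, (hT e he).2])
  have hF : IsSealed ea eb T ∅ F := fun x hx y hy hmeet => .inl <| by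
    rcases hmeet with h | h
    · exact mem_filter.2 ⟨hy, h.trans (mem_filter.1 hx).2⟩
    · rw [hFB] at hx ⊢
      exact mem_filter.2 ⟨hy, h.trans (mem_filter.1 hx).2⟩
  refine exists_isProperOn_of_card_eq_three r ?_
  rw [← hconn F (filter_subset _ _) ⟨e, by simp [F, he]⟩ hF, (hT e he).1]

variable (ea eb)

theorem exists_isProperOn (T : Finset E)
    (hT : ∀ x ∈ T, #(T.filter (ea · = ea x)) ≤ 3 ∧ #(T.filter (eb · = eb x)) ≤ 3) :
    ∃ f, IsProperOn ea eb r T f := by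
  induction T using Finset.strongInduction with
  | H T ih =>
  have ih' : ∀ S ⊂ T, ∃ f, IsProperOn ea eb r S f := fun S hS => ih S hS fun x hx =>
    ⟨(card_le_card (filter_subset_filter _ hS.subset)).trans (hT x (hS.subset hx)).1,
      (card_le_card (filter_subset_filter _ hS.subset)).trans (hT x (hS.subset hx)).2⟩
  by_cases hlow : ∃ x ∈ T, #(T.filter (ea · = ea x)) ≤ 2 ∨ #(T.filter (eb · = eb x)) ≤ 2
  · obtain ⟨x, hx, hdeg⟩ := hlow
    obtain ⟨f, hf⟩ := ih' _ (erase_ssubset hx)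
    have hcard := card_forbidden_le ea eb r T f x
    rw [card_erase_of_mem (by simp [hx]), card_erase_of_mem (by simp [hx])] at hcard
    obtain ⟨c, hc⟩ := exists_isProperOn_update ea eb r hf
      (by rw [Fintype.card_fin]; have := hT x hx; omega)
    exact ⟨_, hc⟩
  by_cases hsplit : ∃ S ⊆ T, S.Nonempty ∧ S ≠ T ∧ IsSealed ea eb T ∅ S
  · obtain ⟨S, hST, hSne, hne, hS⟩ := hsplit
    obtain ⟨f, hf⟩ := ih' S (ssubset_of_subset_of_ne hST hne)
    obtain ⟨g, hg⟩ := ih' (T \ S) (sdiff_ssubset hST hSne)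
    exact ⟨_, IsProperOn.piecewise ea eb r hS hf hg⟩
  push Not at hlow hsplit
  refine exists_isProperOn_of_isCubicOn r (fun x hx => ?_) fun S hST hSne hS => ?_
  · exact ⟨le_antisymm (hT x hx).1 (hlow x hx).1, le_antisymm (hT x hx).2 (hlow x hx).2⟩
  · by_contra hne
    exact hsplit S hST hSne hne hS

end Cubic

end DistortionColoring

/-- Every bipartite multigraph of maximum degree at most 3, whose edges carry
distortion permutations of the colour set {0,1,2,3}, admits a proper
distortion-colouring with 4 colours. The multigraph is encoded by an edge type
`E` with endpoint maps `ea : E → A`, `eb : E → B`. -/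
theorem stmt_0 {A B E : Type} [Fintype E] [DecidableEq A] [DecidableEq B]
    (ea : E → A) (eb : E → B)
    (hA : ∀ v : A, (Finset.univ.filter fun e => ea e = v).card ≤ 3)
    (hB : ∀ v : B, (Finset.univ.filter fun e => eb e = v).card ≤ 3)
    (r : E → Equiv.Perm (Fin 4)) :
    ∃ f : E → Fin 4,
      (∀ e g : E, e ≠ g → ea e = ea g → f e ≠ f g) ∧
      (∀ e g : E, e ≠ g → eb e = eb g → r e (f e) ≠ r g (f g)) := by
  classical
  obtain ⟨f, hf⟩ := DistortionColoring.exists_isProperOn ea eb r univ fun x _ =>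
    ⟨hA (ea x), hB (eb x)⟩
  exact ⟨f, fun e g hne => (hf e (mem_univ e) g (mem_univ g) hne).1,
    fun e g hne => (hf e (mem_univ e) g (mem_univ g) hne).2⟩
end

section
/- Every bipartite multigraph with maximum degree at most d, where each edge e is assigned an integer delay r(e), admits an edge colouring f : E → {0,1,...,d} such that f is proper on the class A and the colouring e ↦ f(e) + r(e) (mod d+1) is proper on the class B, in the special case d = 3. -/
/-!
An edge with at most three coloured neighbours in the line graph can always be coloured, since
each neighbour forbids one of the four colours (a neighbour at the `B`-end forbids the colour
shifted by the difference of the delays). So a minimal counterexample is connected and cubic, and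
there Lovász's proof of Brooks' theorem goes through: choose an edge `z`, a neighbour `a` at its
`A`-end and a neighbour `c` at its `B`-end such that deleting `a` and `c` leaves the line graph
connected; colour `a` and `c` so that they forbid the same colour at `z`, then the other edges in
order of decreasing distance from `z`, and `z` last.

Such a triple exists unless the component is three parallel edges, which are coloured directly.
In a cubic bipartite graph each side of an edge cut is met by a multiple of three edge-ends, so
the two edges of a two-edge cut never share a vertex; and cuts `{a, b}`, `{b, c}` give the cut
`{a, c}` by taking the symmetric difference of the vertex sets.
-/

open Finset

namespace SimpleGraph

variable {V : Type*} {G : SimpleGraph V} {u v : V}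

lemma Reachable.mem_of_adj_mem {K : Set V} (hK : ∀ x y, G.Adj x y → x ∈ K → y ∈ K)
    (h : G.Reachable u v) (hu : u ∈ K) : v ∈ K := by
  obtain ⟨p⟩ := h
  induction p with
  | nil => exact hu
  | cons hadj _ ih => exact ih (hK _ _ hadj hu)

lemma Reachable.exists_adj_dist_lt (h : G.Reachable u v) (huv : u ≠ v) :
    ∃ w, G.Adj u w ∧ G.dist w v < G.dist u v := by
  obtain ⟨p, hp⟩ := h.exists_walk_length_eq_dist
  cases p with
  | nil => exact absurd rfl huv
  | cons hadj q =>
    rw [Walk.length_cons] at hp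
    exact ⟨_, hadj, (dist_le q).trans_lt (by omega)⟩

end SimpleGraph

lemma Set.InjOn.prodMk_of_eqOn {E X Y : Type*} {φ : E → X} {c c₁ c₂ : E → Y} {S K : Set E}
    (hK : ∀ x ∈ K, ∀ y ∈ S, φ x = φ y → y ∈ K) (h₁ : Set.InjOn (fun e => (φ e, c₁ e)) K)
    (h₂ : Set.InjOn (fun e => (φ e, c₂ e)) (S \ K)) (hc₁ : Set.EqOn c c₁ K)
    (hc₂ : Set.EqOn c c₂ (S \ K)) :
    Set.InjOn (fun e => (φ e, c e)) S := by
  intro x hx y hy hxy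
  simp only [Prod.mk.injEq] at hxy
  by_cases hxK : x ∈ K
  · have hyK := hK x hxK y hy hxy.1
    exact h₁ hxK hyK (by simp only [← hc₁ hxK, ← hc₁ hyK, hxy])
  · have hyK : y ∉ K := fun hyK => hxK (hK y hyK x hx hxy.1.symm)
    exact h₂ ⟨hx, hxK⟩ ⟨hy, hyK⟩ (by simp only [← hc₂ ⟨hx, hxK⟩, ← hc₂ ⟨hy, hyK⟩, hxy])

namespace DelayColouring

variable {A B E V : Type*}

section Partners

variable [DecidableEq E] [DecidableEq V] {φ : E → V} {S T : Finset E} {e g : E}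

variable (φ) in
def partners (S : Finset E) (e : E) : Finset E := {g ∈ S | φ g = φ e}.erase e

@[simp]
lemma mem_partners : g ∈ partners φ S e ↔ g ∈ S ∧ g ≠ e ∧ φ g = φ e := by
  simp only [partners, mem_erase, mem_filter]; tauto

lemma partners_mono (h : S ⊆ T) (e : E) : partners φ S e ⊆ partners φ T e :=
  erase_subset_erase _ (filter_subset_filter _ h)

@[simp]
lemma partners_erase_self : partners φ (S.erase e) e = partners φ S e := by
  ext g; simp +contextual

lemma card_partners_lt (hST : S ⊆ T) (hg : g ∈ partners φ T e) (hgS : g ∉ S) :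
    #(partners φ S e) < #(partners φ T e) :=
  card_lt_card ⟨partners_mono hST e, fun h => hgS (mem_partners.1 (h hg)).1⟩

lemma card_filter_eq_card_partners_add_one (he : e ∈ S) :
    #{g ∈ S | φ g = φ e} = #(partners φ S e) + 1 :=
  (card_erase_add_one (s := {g ∈ S | φ g = φ e}) (mem_filter.2 ⟨he, rfl⟩)).symm

lemma card_partners_le [Fintype E] {k : ℕ} (h : ∀ v, #{g | φ g = v} ≤ k + 1) :
    #(partners φ S e) ≤ k := by
  have := card_le_card (partners_mono (φ := φ) (subset_univ S) e)
  have := card_filter_eq_card_partners_add_one (φ := φ) (mem_univ e)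
  have := h (φ e)
  omega

lemma dvd_card_filter_of_card_partners_eq {k : ℕ} (hS : ∀ e ∈ S, #(partners φ S e) = k)
    (p : V → Prop) [DecidablePred p] : k + 1 ∣ #{e ∈ S | p (φ e)} := by
  rw [card_eq_sum_card_image φ]
  refine dvd_sum fun v hv => ?_
  obtain ⟨e, he, rfl⟩ := mem_image.1 hv
  rw [mem_filter] at he
  rw [filter_filter, filter_congr fun g _ => and_iff_right_of_imp fun h : φ g = φ e => h ▸ he.2,
    card_filter_eq_card_partners_add_one he.1, hS e he.1]

end Partners

section Colouring

variable (ea : E → A) (eb : E → B) (δ : E → ZMod 4)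

-- Colours at a common `A`-vertex are distinct, and so are delayed colours at a common `B`-vertex.
def IsProperOn (f : E → ZMod 4) (S : Finset E) : Prop :=
  Set.InjOn (fun e => (ea e, f e)) S ∧ Set.InjOn (fun e => (eb e, f e + δ e)) S

def forbidden [DecidableEq A] [DecidableEq B] [DecidableEq E] (f : E → ZMod 4) (S : Finset E)
    (e : E) : Finset (ZMod 4) :=
  (partners ea S e).image f ∪ (partners eb S e).image fun g => f g + δ g - δ e

variable {ea eb δ} {f : E → ZMod 4} {S : Finset E} {e : E}

lemma IsProperOn.piecewise [DecidableEq E] {K : Finset E} {f₁ f₂ : E → ZMod 4}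
    (hK : ∀ x ∈ K, ∀ y ∈ S, (ea x = ea y ∨ eb x = eb y) → y ∈ K)
    (h₁ : IsProperOn ea eb δ f₁ K) (h₂ : IsProperOn ea eb δ f₂ (S \ K)) :
    IsProperOn ea eb δ (K.piecewise f₁ f₂) S := by
  rw [IsProperOn, coe_sdiff] at h₂
  have hc₁ : Set.EqOn (K.piecewise f₁ f₂) f₁ K := fun x hx => piecewise_eq_of_mem _ _ _ hx
  have hc₂ : Set.EqOn (K.piecewise f₁ f₂) f₂ (↑S \ ↑K) := fun x hx =>
    piecewise_eq_of_notMem _ _ _ hx.2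
  exact ⟨h₁.1.prodMk_of_eqOn (fun x hx y hy h => hK x hx y hy (.inl h)) h₂.1 hc₁ hc₂,
    h₁.2.prodMk_of_eqOn (fun x hx y hy h => hK x hx y hy (.inr h)) h₂.2
      (fun x hx => congrArg (· + δ x) (hc₁ hx)) fun x hx => congrArg (· + δ x) (hc₂ hx)⟩

lemma isProperOn_pair [DecidableEq E] {a c : E} (ha : ea a ≠ ea c) (hb : eb a ≠ eb c) :
    IsProperOn ea eb δ f {a, c} := by
  rw [IsProperOn, coe_pair, Set.injOn_pair, Set.injOn_pair]
  exact ⟨fun h => absurd (congrArg Prod.fst h) ha, fun h => absurd (congrArg Prod.fst h) hb⟩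

variable [DecidableEq A] [DecidableEq B] [DecidableEq E]

lemma card_forbidden_le :
    #(forbidden ea eb δ f S e) ≤ #(partners ea S e) + #(partners eb S e) :=
  (card_union_le _ _).trans (add_le_add card_image_le card_image_le)

lemma card_forbidden_lt_of_mem {C : Finset E} {x y : E} (hCS : C ⊆ S) (hy : y ∈ S)
    (hyC : y ∉ C) (hyx : y ≠ x) (hsh : ea y = ea x ∨ eb y = eb x)
    (hdeg : #(partners ea S x) + #(partners eb S x) ≤ 4) :
    #(forbidden ea eb δ f C x) < 4 := by
  have := card_forbidden_le (ea := ea) (eb := eb) (δ := δ) (f := f) (S := C) (e := x)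
  have := card_le_card (partners_mono (φ := ea) hCS x)
  have := card_le_card (partners_mono (φ := eb) hCS x)
  rcases hsh with h | h
  · have := card_partners_lt hCS (mem_partners.2 ⟨hy, hyx, h⟩) hyC
    omega
  · have := card_partners_lt hCS (mem_partners.2 ⟨hy, hyx, h⟩) hyC
    omega

lemma card_forbidden_lt_of_eq {a c z : E} (ha : a ∈ partners ea S z) (hc : c ∈ partners eb S z)
    (h : f a = f c + δ c - δ z) :
    #(forbidden ea eb δ f S z) < #(partners ea S z) + #(partners eb S z) := by
  set Pa := (partners ea S z).erase a
  set Pb := (partners eb S z).erase c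
  have hsub : forbidden ea eb δ f S z ⊆
      insert (f a) (Pa.image f ∪ Pb.image fun g => f g + δ g - δ z) := by
    intro v hv
    simp only [forbidden, Pa, Pb, mem_union, mem_image, mem_insert, mem_erase] at hv ⊢
    rcases hv with ⟨g, hg, rfl⟩ | ⟨g, hg, rfl⟩
    · by_cases hga : g = a
      · exact .inl (hga ▸ rfl)
      · exact .inr (.inl ⟨g, ⟨hga, hg⟩, rfl⟩)
    · by_cases hgc : g = c
      · exact .inl (hgc ▸ h.symm)
      · exact .inr (.inr ⟨g, ⟨hgc, hg⟩, rfl⟩)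
  calc #(forbidden ea eb δ f S z)
      ≤ #(Pa.image f ∪ Pb.image fun g => f g + δ g - δ z) + 1 :=
        (card_le_card hsub).trans (card_insert_le _ _)
    _ ≤ #Pa + #Pb + 1 := by
        gcongr
        exact (card_union_le _ _).trans (add_le_add card_image_le card_image_le)
    _ < #(partners ea S z) + #(partners eb S z) := by
        have : #Pa + 1 = #(partners ea S z) := card_erase_add_one ha
        have : #Pb + 1 = #(partners eb S z) := card_erase_add_one hc
        omega

lemma IsProperOn.update (hf : IsProperOn ea eb δ f S) (he : e ∉ S) {v : ZMod 4}
    (hv : v ∉ forbidden ea eb δ f S e) :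
    IsProperOn ea eb δ (Function.update f e v) (insert e S) := by
  have hfix : ∀ g ∈ S, Function.update f e v g = f g := fun g hg =>
    Function.update_of_ne (ne_of_mem_of_not_mem hg he) _ _
  simp only [forbidden, mem_union, mem_image, mem_partners, not_or, not_exists, not_and] at hv
  rw [IsProperOn, coe_insert, Set.injOn_insert (mem_coe.not.2 he),
    Set.injOn_insert (mem_coe.not.2 he)]
  refine ⟨⟨hf.1.congr fun g hg => by simp [hfix g hg], ?_⟩,
    ⟨hf.2.congr fun g hg => by simp [hfix g hg], ?_⟩⟩
  · rintro ⟨g, hg, hge⟩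
    simp only [Prod.mk.injEq, hfix g hg, Function.update_self] at hge
    exact hv.1 g ⟨hg, ne_of_mem_of_not_mem hg he, hge.1⟩ hge.2
  · rintro ⟨g, hg, hge⟩
    simp only [Prod.mk.injEq, hfix g hg, Function.update_self] at hge
    exact hv.2 g ⟨hg, ne_of_mem_of_not_mem hg he, hge.1⟩ (by rw [hge.2]; ring)

lemma IsProperOn.exists_update (hf : IsProperOn ea eb δ f S) (he : e ∉ S)
    (hcard : #(forbidden ea eb δ f S e) < 4) :
    ∃ v, IsProperOn ea eb δ (Function.update f e v) (insert e S) := by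
  obtain ⟨v, -, hv⟩ := exists_mem_notMem_of_card_lt_card (s := forbidden ea eb δ f S e)
    (t := univ) (by rwa [card_univ, ZMod.card])
  exact ⟨v, hf.update he hv⟩

end Colouring

section Triple

variable {ea : E → A} {eb : E → B} {δ : E → ZMod 4}

lemma exists_three_colours_pairwise_ne (d₁ d₂ d₃ : ZMod 4) :
    ∃ x₁ x₂ x₃ : ZMod 4, x₁ ≠ x₂ ∧ x₁ ≠ x₃ ∧ x₂ ≠ x₃ ∧
      x₁ + d₁ ≠ x₂ + d₂ ∧ x₁ + d₁ ≠ x₃ + d₃ ∧ x₂ + d₂ ≠ x₃ + d₃ := by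
  revert d₁ d₂ d₃; decide

lemma exists_isProperOn_of_subset_triple [DecidableEq E] {S : Finset E} {e₁ e₂ e₃ : E}
    (hS : S ⊆ {e₁, e₂, e₃}) : ∃ f, IsProperOn ea eb δ f S := by
  obtain ⟨x₁, x₂, x₃, h₁₂, h₁₃, h₂₃, h₁₂', h₁₃', h₂₃'⟩ :=
    exists_three_colours_pairwise_ne (δ e₁) (δ e₂) (δ e₃)
  refine ⟨fun e => if e = e₁ then x₁ else if e = e₂ then x₂ else x₃, ?_, ?_⟩ <;>
  · intro x hx y hy hxy
    have hx := hS hx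
    have hy := hS hy
    simp only [mem_insert, mem_singleton, Prod.mk.injEq] at hx hy hxy
    split_ifs at hxy <;> simp_all

end Triple

section ConflictGraph

variable (ea : E → A) (eb : E → B)

-- The line graph of the multigraph with edge set `S`.
def conflictGraph (S : Finset E) : SimpleGraph E where
  Adj x y := x ∈ S ∧ y ∈ S ∧ x ≠ y ∧ (ea x = ea y ∨ eb x = eb y)
  symm := ⟨fun _ _ h => ⟨h.2.1, h.1, h.2.2.1.symm, h.2.2.2.imp Eq.symm Eq.symm⟩⟩
  loopless := ⟨fun _ h => h.2.2.1 rfl⟩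

variable {ea eb}

lemma mem_of_reachable_conflictGraph {S : Finset E} {x y : E}
    (h : (conflictGraph ea eb S).Reachable x y) (hy : y ∈ S) : x ∈ S :=
  h.symm.mem_of_adj_mem (K := {x | x ∈ S})
    (fun _ _ (hadj : (conflictGraph ea eb S).Adj _ _) _ => hadj.2.1) hy

end ConflictGraph

section Greedy

variable [DecidableEq A] [DecidableEq B] [DecidableEq E] {ea : E → A} {eb : E → B}
  {δ : E → ZMod 4}

lemma IsProperOn.exists_extend_of_descending (ρ : E → ℕ) {S T : Finset E} {z : E}
    {f₀ : E → ZMod 4} (hf₀ : IsProperOn ea eb δ f₀ (S \ insert z T)) (hTS : insert z T ⊆ S)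
    (hzT : z ∉ T) (hdeg : ∀ x ∈ T, #(partners ea S x) + #(partners eb S x) ≤ 4)
    (hdesc : ∀ x ∈ T, ∃ y ∈ insert z T, (ea y = ea x ∨ eb y = eb x) ∧ ρ y < ρ x) :
    ∃ f, IsProperOn ea eb δ f (S.erase z) ∧ ∀ x ∉ T, f x = f₀ x := by
  induction T using Finset.strongInduction generalizing f₀ with | H T ih =>
  rcases T.eq_empty_or_nonempty with rfl | hT
  · exact ⟨f₀, by simpa [sdiff_singleton_eq_erase] using hf₀, fun _ _ => rfl⟩
  obtain ⟨x, hxT, hxmax⟩ := exists_max_image T ρ hT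
  have hxz : x ≠ z := ne_of_mem_of_not_mem hxT hzT
  have hxC : x ∉ S \ insert z T := fun h => (mem_sdiff.1 h).2 (mem_insert_of_mem hxT)
  obtain ⟨y, hy, hyx, hρ⟩ := hdesc x hxT
  -- the neighbour `y` of `x` closer to `z` is still uncoloured
  have hcard : #(forbidden ea eb δ f₀ (S \ insert z T) x) < 4 :=
    card_forbidden_lt_of_mem sdiff_subset (hTS hy) (fun h => (mem_sdiff.1 h).2 hy)
      (fun h => hρ.ne (congrArg ρ h)) hyx (hdeg x hxT)
  obtain ⟨v, hv⟩ := hf₀.exists_update hxC hcard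
  have hC : insert x (S \ insert z T) = S \ insert z (T.erase x) := by
    ext w
    have := hTS (mem_insert_of_mem hxT)
    simp only [mem_insert, mem_sdiff, mem_erase]
    grind
  rw [hC] at hv
  have hdesc' : ∀ w ∈ T.erase x, ∃ y ∈ insert z (T.erase x),
      (ea y = ea w ∨ eb y = eb w) ∧ ρ y < ρ w := by
    intro w hw
    obtain ⟨y, hy, hyw, hρ⟩ := hdesc w (mem_of_mem_erase hw)
    have hyx : y ≠ x := fun h => (hρ.trans_le (hxmax w (mem_of_mem_erase hw))).ne (h ▸ rfl)
    refine ⟨y, ?_, hyw, hρ⟩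
    simp only [mem_insert, mem_erase] at hy ⊢
    tauto
  obtain ⟨f, hf, hagree⟩ := ih (T.erase x) (erase_ssubset hxT) hv
    ((insert_subset_insert z (erase_subset x T)).trans hTS) (fun h => hzT (mem_of_mem_erase h))
    (fun w hw => hdeg w (mem_of_mem_erase hw)) hdesc'
  refine ⟨f, hf, fun w hw => ?_⟩
  rw [hagree w fun h => hw (mem_of_mem_erase h),
    Function.update_of_ne (ne_of_mem_of_not_mem hxT hw).symm]

lemma IsProperOn.exists_extend_of_reachable {S T : Finset E} {z : E} {f₀ : E → ZMod 4}
    (hf₀ : IsProperOn ea eb δ f₀ (S \ insert z T)) (hTS : insert z T ⊆ S) (hzT : z ∉ T)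
    (hdeg : ∀ x ∈ T, #(partners ea S x) + #(partners eb S x) ≤ 4)
    (hreach : ∀ x ∈ T, (conflictGraph ea eb (insert z T)).Reachable x z) :
    ∃ f, IsProperOn ea eb δ f (S.erase z) ∧ ∀ x ∉ T, f x = f₀ x := by
  refine hf₀.exists_extend_of_descending (fun x => (conflictGraph ea eb (insert z T)).dist x z)
    hTS hzT hdeg fun x hx => ?_
  obtain ⟨y, hxy, hlt⟩ := (hreach x hx).exists_adj_dist_lt (ne_of_mem_of_not_mem hx hzT)
  exact ⟨y, hxy.2.1, hxy.2.2.2.imp Eq.symm Eq.symm, hlt⟩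

end Greedy

section CutPair

variable (ea : E → A) (eb : E → B)

def Crosses (WA : Set A) (WB : Set B) (e : E) : Prop :=
  ¬(ea e ∈ WA ↔ eb e ∈ WB)

def IsCutPair (U : Finset E) (a c : E) : Prop :=
  ∃ (WA : Set A) (WB : Set B), (∀ e ∈ U, e ≠ a → e ≠ c → ¬Crosses ea eb WA WB e) ∧
    Crosses ea eb WA WB a ∧ Crosses ea eb WA WB c

def IsCubic [DecidableEq A] [DecidableEq B] [DecidableEq E] (U : Finset E) : Prop :=
  ∀ e ∈ U, #(partners ea U e) = 2 ∧ #(partners eb U e) = 2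

variable {ea eb} {U : Finset E} {WA : Set A} {WB : Set B} {a b c x y z : E}

lemma IsCutPair.symm (h : IsCutPair ea eb U a c) : IsCutPair ea eb U c a := by
  obtain ⟨WA, WB, hU, ha, hc⟩ := h
  exact ⟨WA, WB, fun e he hec hea => hU e he hea hec, hc, ha⟩

lemma crosses_symmDiff {WA' : Set A} {WB' : Set B} {e : E} :
    Crosses ea eb (symmDiff WA WA') (symmDiff WB WB') e ↔
      ¬(Crosses ea eb WA WB e ↔ Crosses ea eb WA' WB' e) := by
  simp only [Crosses, Set.mem_symmDiff]
  tauto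

lemma IsCutPair.trans (h₁ : IsCutPair ea eb U a b) (h₂ : IsCutPair ea eb U b c) (ha : a ∈ U)
    (hc : c ∈ U) (hab : a ≠ b) (hbc : b ≠ c) (hac : a ≠ c) : IsCutPair ea eb U a c := by
  obtain ⟨WA, WB, hU₁, ha₁, hb₁⟩ := h₁
  obtain ⟨WA', WB', hU₂, hb₂, hc₂⟩ := h₂
  refine ⟨symmDiff WA WA', symmDiff WB WB', fun e he hea hec => ?_, ?_, ?_⟩ <;>
    rw [crosses_symmDiff]
  · by_cases heb : e = b
    · subst heb
      tauto
    · have := hU₁ e he hea heb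
      have := hU₂ e he heb hec
      tauto
  · have := hU₂ a ha hab hac
    tauto
  · have := hU₁ c hc (Ne.symm hac) (Ne.symm hbc)
    tauto

lemma ea_mem_of_reachable_of_not_crosses (hnc : ∀ e ∈ U, ¬Crosses ea eb WA WB e)
    (h : (conflictGraph ea eb U).Reachable x y) (hx : ea x ∈ WA) : ea y ∈ WA := by
  refine h.mem_of_adj_mem (K := {e | ea e ∈ WA}) (fun u w huw hu => ?_) hx
  obtain ⟨huU, hwU, -, hsh | hsh⟩ := huw
  · exact (show ea w ∈ WA from hsh ▸ hu)
  · exact (not_not.1 (hnc w hwU)).2 (hsh ▸ (not_not.1 (hnc u huU)).1 hu)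

variable [DecidableEq A] [DecidableEq B] [DecidableEq E]

/-- The edges of `U` with an end in `WA` come three per vertex, and so do those with an end in
`WB`; all edges but `a` and `c` contribute alike to both counts. -/
lemma IsCubic.ite_add_ite_eq (hU : IsCubic ea eb U) (ha : a ∈ U) (hc : c ∈ U) (hac : a ≠ c)
    [DecidablePred (· ∈ WA)] [DecidablePred (· ∈ WB)]
    (hnc : ∀ e ∈ U, e ≠ a → e ≠ c → ¬Crosses ea eb WA WB e) :
    (if ea a ∈ WA then 1 else 0) + (if ea c ∈ WA then 1 else 0) =
      (if eb a ∈ WB then 1 else 0) + (if eb c ∈ WB then 1 else 0) := by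
  have hsplit : ∀ (p : E → Prop) [DecidablePred p], #{e ∈ U | p e} =
      (if p a then 1 else 0) + ((if p c then 1 else 0) +
        ∑ e ∈ (U.erase a).erase c, if p e then 1 else 0) := by
    intro p _
    rw [card_filter, ← add_sum_erase U _ ha,
      ← add_sum_erase (U.erase a) _ (mem_erase.2 ⟨hac.symm, hc⟩)]
  have hA := dvd_card_filter_of_card_partners_eq (fun e he => (hU e he).1) (· ∈ WA)
  have hB := dvd_card_filter_of_card_partners_eq (fun e he => (hU e he).2) (· ∈ WB)
  have hrest : ∑ e ∈ (U.erase a).erase c, (if ea e ∈ WA then 1 else 0) =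
      ∑ e ∈ (U.erase a).erase c, (if eb e ∈ WB then 1 else 0) := by
    refine sum_congr rfl fun e he => ?_
    simp only [mem_erase] at he
    simp only [not_not.1 (hnc e he.2.2 he.2.1 he.1)]
  rw [hsplit] at hA hB
  rw [hrest] at hA
  split_ifs at hA hB ⊢ <;> omega

lemma IsCubic.crosses_iff (hU : IsCubic ea eb U) (ha : a ∈ U) (hc : c ∈ U) (hac : a ≠ c)
    (hnc : ∀ e ∈ U, e ≠ a → e ≠ c → ¬Crosses ea eb WA WB e) :
    Crosses ea eb WA WB a ↔ Crosses ea eb WA WB c := by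
  classical
  have := hU.ite_add_ite_eq ha hc hac hnc
  unfold Crosses
  split_ifs at this <;> first | omega | tauto

lemma IsCubic.ne_of_isCutPair (hU : IsCubic ea eb U) (ha : a ∈ U) (hc : c ∈ U) (hac : a ≠ c)
    (h : IsCutPair ea eb U a c) : ea a ≠ ea c ∧ eb a ≠ eb c := by
  classical
  obtain ⟨WA, WB, hnc, hca, hcc⟩ := h
  have := hU.ite_add_ite_eq ha hc hac hnc
  unfold Crosses at hca hcc
  constructor <;> intro heq <;> rw [heq] at this hca <;> split_ifs at this <;>
    first | omega | tauto

lemma IsCubic.reachable_of_not_isCutPair (hU : IsCubic ea eb U)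
    (hconn : ∀ x ∈ U, ∀ y ∈ U, (conflictGraph ea eb U).Reachable x y) (ha : a ∈ U) (hc : c ∈ U)
    (hac : a ≠ c) (hz : z ∈ (U.erase a).erase c) (hcut : ¬IsCutPair ea eb U a c) :
    ∀ x ∈ (U.erase a).erase c, (conflictGraph ea eb ((U.erase a).erase c)).Reachable x z := by
  set T := (U.erase a).erase c
  by_contra! ⟨x, hxT, hxz⟩
  -- the component `D` of `z` in `T` would make `{a, c}` a cut pair
  set D : Set E := {y | (conflictGraph ea eb T).Reachable y z}
  have hDT : ∀ d ∈ D, d ∈ T := fun d hd => mem_of_reachable_conflictGraph hd hz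
  have hD : ∀ e ∈ T, ∀ d ∈ D, (ea e = ea d ∨ eb e = eb d) → e ∈ D := by
    intro e he d hd hsh
    by_cases hed : e = d
    · exact hed ▸ hd
    · exact SimpleGraph.Adj.reachable (G := conflictGraph ea eb T) ⟨he, hDT d hd, hed, hsh⟩
        |>.trans hd
  have hDA : ∀ e ∈ T, ea e ∈ ea '' D ↔ e ∈ D := fun e he =>
    ⟨fun ⟨d, hd, hde⟩ => hD e he d hd (Or.inl hde.symm), fun h => ⟨e, h, rfl⟩⟩
  have hDB : ∀ e ∈ T, eb e ∈ eb '' D ↔ e ∈ D := fun e he =>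
    ⟨fun ⟨d, hd, hde⟩ => hD e he d hd (Or.inr hde.symm), fun h => ⟨e, h, rfl⟩⟩
  have hnc : ∀ e ∈ U, e ≠ a → e ≠ c → ¬Crosses ea eb (ea '' D) (eb '' D) e := by
    intro e he hea hec
    have heT : e ∈ T := by simp [T, he, hea, hec]
    simp [Crosses, hDA e heT, hDB e heT]
  have hca : ¬Crosses ea eb (ea '' D) (eb '' D) a := fun hca =>
    hcut ⟨_, _, hnc, hca, (hU.crosses_iff ha hc hac hnc).1 hca⟩
  have hcc : ¬Crosses ea eb (ea '' D) (eb '' D) c := (hU.crosses_iff ha hc hac hnc).not.1 hca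
  have hnc' : ∀ e ∈ U, ¬Crosses ea eb (ea '' D) (eb '' D) e := by
    intro e he
    by_cases hea : e = a
    · exact hea ▸ hca
    by_cases hec : e = c
    · exact hec ▸ hcc
    exact hnc e he hea hec
  have hzU : z ∈ U := mem_of_mem_erase (mem_of_mem_erase hz)
  have hxU : x ∈ U := mem_of_mem_erase (mem_of_mem_erase hxT)
  have hxD : ea x ∈ ea '' D :=
    ea_mem_of_reachable_of_not_crosses hnc' (hconn z hzU x hxU)
      ⟨z, SimpleGraph.Reachable.refl z, rfl⟩
  exact hxz ((hDA x hxT).1 hxD)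

end CutPair

section Cubic

variable [DecidableEq A] [DecidableEq B] [DecidableEq E] {ea : E → A} {eb : E → B}
  {δ : E → ZMod 4} {U : Finset E} {a c p w z : E}

lemma IsCubic.exists_isProperOn_of_not_isCutPair (hU : IsCubic ea eb U)
    (hconn : ∀ x ∈ U, ∀ y ∈ U, (conflictGraph ea eb U).Reachable x y) (hz : z ∈ U)
    (ha : a ∈ U) (hc : c ∈ U) (haz : ea a = ea z) (haz' : eb a ≠ eb z) (hcz : eb c = eb z)
    (hcz' : ea c ≠ ea z) (hcut : ¬IsCutPair ea eb U a c) :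
    ∃ f, IsProperOn ea eb δ f U := by
  have hac : a ≠ c := fun h => hcz' (h ▸ haz)
  have hza : z ≠ a := fun h => haz' (h ▸ rfl)
  have hzc : z ≠ c := fun h => hcz' (h ▸ rfl)
  set T := (U.erase a).erase c
  have hzT : z ∈ T := by simp [T, hz, hza, hzc]
  have hreach := hU.reachable_of_not_isCutPair hconn ha hc hac hzT hcut
  -- `a` and `c` are coloured so that they forbid the same colour at `z`
  set f₀ : E → ZMod 4 := fun e => if e = c then δ z - δ c else 0
  have hf₀ : IsProperOn ea eb δ f₀ (U \ insert z (T.erase z)) := by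
    have : U \ insert z (T.erase z) = {a, c} := by
      ext x
      simp only [T, mem_sdiff, mem_insert, mem_erase, mem_singleton]
      grind
    exact this ▸ isProperOn_pair (haz.trans_ne hcz'.symm) (haz'.trans_eq hcz.symm)
  have hreach' : ∀ x ∈ T.erase z, (conflictGraph ea eb (insert z (T.erase z))).Reachable x z := by
    rw [insert_erase hzT]
    exact fun x hx => hreach x (mem_of_mem_erase hx)
  obtain ⟨f, hf, hff₀⟩ := hf₀.exists_extend_of_reachable
    ((insert_erase hzT).symm ▸ (erase_subset c _).trans (erase_subset a U)) (notMem_erase z T)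
    (fun x hx => by
      have := hU x (mem_of_mem_erase (mem_of_mem_erase (mem_of_mem_erase hx)))
      omega) hreach'
  have hfa : f a = f c + δ c - δ z := by
    rw [hff₀ a (by simp [T]), hff₀ c (by simp [T])]
    simp [f₀, hac]
  have hcard : #(forbidden ea eb δ f (U.erase z) z) < 4 := by
    have heq : forbidden ea eb δ f (U.erase z) z = forbidden ea eb δ f U z := by
      simp only [forbidden, partners_erase_self]
    rw [heq]
    have := card_forbidden_lt_of_eq (mem_partners.2 ⟨ha, hza.symm, haz⟩)
      (mem_partners.2 ⟨hc, hzc.symm, hcz⟩) hfa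
    have := hU z hz
    omega
  obtain ⟨v, hv⟩ := hf.exists_update (notMem_erase z U) hcard
  exact ⟨_, insert_erase hz ▸ hv⟩

lemma subset_insert_partners_of_partners_eq (hz : z ∈ U)
    (hconn : ∀ x ∈ U, ∀ y ∈ U, (conflictGraph ea eb U).Reachable x y)
    (hAB : partners ea U z = partners eb U z) : U ⊆ insert z (partners ea U z) := by
  have hclosed : ∀ u w, (conflictGraph ea eb U).Adj u w →
      u ∈ insert z (partners ea U z) → w ∈ insert z (partners ea U z) := by
    rintro u w ⟨-, hwU, -, hsh⟩ hu
    have hu' : ea u = ea z ∧ eb u = eb z := by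
      rcases mem_insert.1 hu with rfl | hu
      · exact ⟨rfl, rfl⟩
      · exact ⟨(mem_partners.1 hu).2.2, (mem_partners.1 (hAB ▸ hu)).2.2⟩
    by_cases hwz : w = z
    · rw [hwz]
      exact mem_insert_self z _
    refine mem_insert_of_mem ?_
    rcases hsh with h | h
    · exact mem_partners.2 ⟨hwU, hwz, h.symm.trans hu'.1⟩
    · exact hAB ▸ mem_partners.2 ⟨hwU, hwz, h.symm.trans hu'.2⟩
  exact fun x hx => (hconn z hz x hx).mem_of_adj_mem hclosed (mem_insert_self z _)

/-- The triple is formed at `w` by `z` or `p` and a `B`-neighbour `d` of `w`: if `{z, d}` and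
`{p, d}` were both cut pairs, so would be `{z, p}`, two parallel edges. -/
lemma IsCubic.exists_isProperOn_of_parallel (hU : IsCubic ea eb U)
    (hconn : ∀ x ∈ U, ∀ y ∈ U, (conflictGraph ea eb U).Reachable x y) (hz : z ∈ U)
    (hwA : w ∈ partners ea U z) (hwB : w ∉ partners eb U z) (hpA : p ∈ partners ea U z)
    (hpB : p ∈ partners eb U z) : ∃ f, IsProperOn ea eb δ f U := by
  obtain ⟨hwU, hwz, hwz_a⟩ := mem_partners.1 hwA
  have hwz_b : eb w ≠ eb z := fun h => hwB (mem_partners.2 ⟨hwU, hwz, h⟩)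
  obtain ⟨hpU, hpz, hpz_a⟩ := mem_partners.1 hpA
  have hpz_b := (mem_partners.1 hpB).2.2
  obtain ⟨d, hdB⟩ := card_pos.1 (((hU w hwU).2).symm ▸ two_pos : 0 < #(partners eb U w))
  obtain ⟨hdU, hdw, hdw_b⟩ := mem_partners.1 hdB
  have hdz : d ≠ z := fun h => hwz_b (hdw_b.symm.trans (congrArg eb h))
  have hdp : d ≠ p := fun h => hwz_b (hdw_b.symm.trans ((congrArg eb h).trans hpz_b))
  have hdw_a : ea d ≠ ea w := by
    intro h
    have := two_lt_card.2 ⟨d, mem_partners.2 ⟨hdU, hdz, h.trans hwz_a⟩, p, hpA, w, hwA, hdp, hdw,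
      fun h => hwz_b (h ▸ hpz_b)⟩
    have := (hU z hz).1
    omega
  by_cases hzd : IsCutPair ea eb U z d
  · refine hU.exists_isProperOn_of_not_isCutPair hconn hwU hpU hdU (hpz_a.trans hwz_a.symm)
      (hpz_b.trans_ne hwz_b.symm) hdw_b hdw_a fun hpd => ?_
    exact (hU.ne_of_isCutPair hz hpU hpz.symm
      (hzd.trans hpd.symm hz hpU hdz.symm hdp hpz.symm)).1 hpz_a.symm
  · exact hU.exists_isProperOn_of_not_isCutPair hconn hwU hz hdU hwz_a.symm hwz_b.symm hdw_b
      hdw_a hzd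

/-- The triple is formed at `z` by `w` and one of its `B`-neighbours `t₁`, `t₂`: if `{w, t₁}` and
`{w, t₂}` were both cut pairs, so would be `{t₁, t₂}`, two edges at the same vertex. -/
lemma IsCubic.exists_isProperOn_of_not_parallel (hU : IsCubic ea eb U)
    (hconn : ∀ x ∈ U, ∀ y ∈ U, (conflictGraph ea eb U).Reachable x y) (hz : z ∈ U)
    (hwA : w ∈ partners ea U z) (hpar : ∀ p ∈ partners ea U z, p ∉ partners eb U z) :
    ∃ f, IsProperOn ea eb δ f U := by
  obtain ⟨hwU, hwz, hwz_a⟩ := mem_partners.1 hwA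
  have hwz_b : eb w ≠ eb z := fun h => hpar w hwA (mem_partners.2 ⟨hwU, hwz, h⟩)
  obtain ⟨t₁, t₂, ht, hB⟩ := card_eq_two.1 (hU z hz).2
  have ht₁ : t₁ ∈ partners eb U z := by simp [hB]
  have ht₂ : t₂ ∈ partners eb U z := by simp [hB]
  obtain ⟨ht₁U, ht₁z, ht₁z_b⟩ := mem_partners.1 ht₁
  obtain ⟨ht₂U, ht₂z, ht₂z_b⟩ := mem_partners.1 ht₂
  have ht₁z_a : ea t₁ ≠ ea z := fun h => hpar t₁ (mem_partners.2 ⟨ht₁U, ht₁z, h⟩) ht₁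
  have ht₂z_a : ea t₂ ≠ ea z := fun h => hpar t₂ (mem_partners.2 ⟨ht₂U, ht₂z, h⟩) ht₂
  by_cases hwt₁ : IsCutPair ea eb U w t₁
  · refine hU.exists_isProperOn_of_not_isCutPair hconn hz hwU ht₂U hwz_a hwz_b ht₂z_b ht₂z_a
      fun hwt₂ => ?_
    have hwt : ∀ t, eb t = eb z → w ≠ t := fun t h hw => hwz_b (hw ▸ h)
    exact (hU.ne_of_isCutPair ht₁U ht₂U ht (hwt₁.symm.trans hwt₂ ht₁U ht₂U
      (hwt t₁ ht₁z_b).symm (hwt t₂ ht₂z_b) ht)).2 (ht₁z_b.trans ht₂z_b.symm)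
  · exact hU.exists_isProperOn_of_not_isCutPair hconn hz hwU ht₁U hwz_a hwz_b ht₁z_b ht₁z_a
      hwt₁

lemma IsCubic.exists_isProperOn (hU : IsCubic ea eb U) (hz : z ∈ U)
    (hconn : ∀ x ∈ U, ∀ y ∈ U, (conflictGraph ea eb U).Reachable x y) :
    ∃ f, IsProperOn ea eb δ f U := by
  obtain ⟨hzA, hzB⟩ := hU z hz
  by_cases hθ : partners ea U z ⊆ partners eb U z
  · -- `U` consists of three parallel edges
    obtain ⟨a₁, a₂, -, hA⟩ := card_eq_two.1 hzA
    have hU₃ := subset_insert_partners_of_partners_eq hz hconn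
      (eq_of_subset_of_card_le hθ (hzB.trans hzA.symm).le)
    exact exists_isProperOn_of_subset_triple (hA ▸ hU₃)
  obtain ⟨w, hwA, hwB⟩ := not_subset.1 hθ
  by_cases hpar : ∃ p ∈ partners ea U z, p ∈ partners eb U z
  · obtain ⟨p, hpA, hpB⟩ := hpar
    exact hU.exists_isProperOn_of_parallel hconn hz hwA hwB hpA hpB
  · push Not at hpar
    exact hU.exists_isProperOn_of_not_parallel hconn hz hwA hpar

end Cubic

theorem exists_isProperOn [DecidableEq A] [DecidableEq B] [Fintype E]
    {ea : E → A} {eb : E → B} (δ : E → ZMod 4) (hA : ∀ v, #{e | ea e = v} ≤ 3)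
    (hB : ∀ v, #{e | eb e = v} ≤ 3) (S : Finset E) : ∃ f, IsProperOn ea eb δ f S := by
  classical
  induction S using Finset.strongInduction with | H S ih =>
  by_cases hlow : ∃ e ∈ S, #(partners ea S e) + #(partners eb S e) ≤ 3
  · obtain ⟨e, he, hle⟩ := hlow
    obtain ⟨f, hf⟩ := ih (S.erase e) (erase_ssubset he)
    have := card_forbidden_le (ea := ea) (eb := eb) (δ := δ) (f := f) (S := S.erase e) (e := e)
    rw [partners_erase_self, partners_erase_self] at this
    obtain ⟨v, hv⟩ := hf.exists_update (notMem_erase e S) (by omega)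
    exact ⟨_, insert_erase he ▸ hv⟩
  push Not at hlow
  have hU : IsCubic ea eb S := fun e he => by
    have := hlow e he
    have := card_partners_le (S := S) (e := e) hA
    have := card_partners_le (S := S) (e := e) hB
    omega
  rcases S.eq_empty_or_nonempty with rfl | ⟨z, hz⟩
  · exact ⟨0, by simp [IsProperOn]⟩
  set K := S.filter fun x => (conflictGraph ea eb S).Reachable x z
  have hzK : z ∈ K := mem_filter.2 ⟨hz, .rfl⟩
  by_cases hKS : K = S
  · refine hU.exists_isProperOn hz fun x hx y hy => ?_
    rw [← hKS, mem_filter] at hx hy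
    exact hx.2.trans hy.2.symm
  have hK : ∀ x ∈ K, ∀ y ∈ S, (ea x = ea y ∨ eb x = eb y) → y ∈ K := by
    intro x hx y hy hxy
    rw [mem_filter] at hx ⊢
    by_cases hyx : y = x
    · exact hyx ▸ hx
    exact ⟨hy, SimpleGraph.Adj.reachable (G := conflictGraph ea eb S)
      ⟨hy, hx.1, hyx, hxy.imp Eq.symm Eq.symm⟩ |>.trans hx.2⟩
  obtain ⟨f₁, hf₁⟩ := ih K (ssubset_of_subset_of_ne (filter_subset _ S) hKS)
  obtain ⟨f₂, hf₂⟩ := ih (S \ K) (sdiff_ssubset (filter_subset _ S) ⟨z, hzK⟩)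
  exact ⟨K.piecewise f₁ f₂, hf₁.piecewise hK hf₂⟩

end DelayColouring

/-- The Haxell–Wilfong–Winkler delay conjecture for d = 3: a bipartite
multigraph of maximum degree at most 3 with integer edge delays admits an
edge colouring with colours in ℤ/4 that is proper on `A`, and such that the
delayed colouring `e ↦ f e + r e (mod 4)` is proper on `B`. -/
theorem stmt_1 {A B E : Type} [Fintype E] [DecidableEq A] [DecidableEq B]
    (ea : E → A) (eb : E → B)
    (hA : ∀ v : A, (Finset.univ.filter fun e => ea e = v).card ≤ 3)
    (hB : ∀ v : B, (Finset.univ.filter fun e => eb e = v).card ≤ 3)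
    (r : E → ℤ) :
    ∃ f : E → ZMod 4,
      (∀ e g : E, e ≠ g → ea e = ea g → f e ≠ f g) ∧
      (∀ e g : E, e ≠ g → eb e = eb g →
        f e + (r e : ZMod 4) ≠ f g + (r g : ZMod 4)) := by
  obtain ⟨f, hfA, hfB⟩ := DelayColouring.exists_isProperOn (fun e => (r e : ZMod 4)) hA hB univ
  exact ⟨f, fun e g hne heq hfg => hne (hfA (mem_univ e) (mem_univ g) (Prod.ext heq hfg)),
    fun e g hne heq hfg => hne (hfB (mem_univ e) (mem_univ g) (Prod.ext heq hfg))⟩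
end

section
/- Suppose Conjecture A holds: for every 3-partite 3-uniform hypergraph H with classes V1, V2, V3 satisfying |V2| = |V3| = |V1| + 1, such that for each x ∈ V1 the hyperedges containing x induce a perfect matching of V2 ∪ V3, there is a matching of H covering all of V1. Then every n × n Latin square contains a partial transversal of size n − 1. -/
/-! Index the first `n - 1` rows of the Latin square by `V1`, and put `(x, j, s)` in `H` when row `x`
has symbol `s` in column `j`; since each row is a bijection from columns to symbols, this hypergraph
satisfies the hypothesis of Conjecture A with `V2 = V3 = Fin n`. A matching covering `V1` picks, in
each of these rows, a cell whose columns and symbols are pairwise distinct: a partial transversal of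
size `n - 1`. -/

open Function

section RowHypergraph

variable {ρ ι α β : Type*}

def rowHypergraph (L : ρ × α → β) (e : ι → ρ) : Set (ι × α × β) :=
  {p | L (e p.1, p.2.1) = p.2.2}

theorem exists_equiv_rowHypergraph [Finite α] {L : ρ × α → α}
    (hrow : ∀ i, Injective fun j => L (i, j)) (e : ι → ρ) (x : ι) :
    ∃ σ : α ≃ α, ∀ a b, (x, a, b) ∈ rowHypergraph L e ↔ σ a = b :=
  ⟨Equiv.ofBijective _ (Finite.injective_iff_bijective.1 (hrow (e x))), fun _ _ => Iff.rfl⟩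

theorem exists_partialTransversal_of_rowHypergraph_matching [Fintype ι] {L : ρ × α → β}
    {e : ι → ρ} (he : Injective e) {m : ι → α × β} (hm : ∀ x, (x, m x) ∈ rowHypergraph L e)
    (hdisj : ∀ x y, x ≠ y → (m x).1 ≠ (m y).1 ∧ (m x).2 ≠ (m y).2) :
    ∃ T : Finset (ρ × α), T.card = Fintype.card ι ∧
      ∀ c ∈ T, ∀ c' ∈ T, c ≠ c' → c.1 ≠ c'.1 ∧ c.2 ≠ c'.2 ∧ L c ≠ L c' := by
  let cell : ι ↪ ρ × α := ⟨fun x => (e x, (m x).1), fun _ _ h => he (congrArg Prod.fst h)⟩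
  refine ⟨Finset.univ.map cell, by simp, ?_⟩
  simp only [Finset.mem_map, Finset.mem_univ, true_and]
  rintro _ ⟨x, rfl⟩ _ ⟨y, rfl⟩ hne
  have hxy : x ≠ y := fun h => hne (h ▸ rfl)
  obtain ⟨hcol, hsym⟩ := hdisj x y hxy
  refine ⟨he.ne hxy, hcol, ?_⟩
  change L (e x, (m x).1) ≠ L (e y, (m y).1)
  rwa [(hm x : L (e x, (m x).1) = (m x).2), (hm y : L (e y, (m y).1) = (m y).2)]

end RowHypergraph

theorem stmt_7_general
    (conjA : ∀ (V1 V2 V3 : Type) [Fintype V1] [Fintype V2] [Fintype V3]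
      (H : Set (V1 × V2 × V3)),
      Fintype.card V2 = Fintype.card V1 + 1 →
      Fintype.card V3 = Fintype.card V1 + 1 →
      (∀ x : V1, ∃ σ : V2 ≃ V3, ∀ (v2 : V2) (v3 : V3),
        (x, v2, v3) ∈ H ↔ σ v2 = v3) →
      ∃ m : V1 → V2 × V3, (∀ x, (x, m x) ∈ H) ∧
        ∀ x y, x ≠ y → (m x).1 ≠ (m y).1 ∧ (m x).2 ≠ (m y).2)
    (n : ℕ) (L : Fin n × Fin n → Fin n)
    (hrow : ∀ i : Fin n, Function.Injective fun j => L (i, j)) :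
    ∃ T : Finset (Fin n × Fin n), T.card = n - 1 ∧
      ∀ c ∈ T, ∀ c' ∈ T, c ≠ c' →
        c.1 ≠ c'.1 ∧ c.2 ≠ c'.2 ∧ L c ≠ L c' := by
  rcases Nat.eq_zero_or_pos n with rfl | hn
  · exact ⟨∅, rfl, by simp⟩
  have hcard : Fintype.card (Fin n) = Fintype.card (Fin (n - 1)) + 1 := by simp; omega
  obtain ⟨m, hm, hdisj⟩ := conjA _ _ _ (rowHypergraph L (Fin.castLE (n.sub_le 1))) hcard hcard
    (exists_equiv_rowHypergraph hrow _)
  simpa using exists_partialTransversal_of_rowHypergraph_matching (Fin.castLE_injective _) hm hdisj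

/-- Conjecture A (Aharoni–Berger–Ziv) implies the Brualdi–Stein conjecture:
if every 3-partite 3-uniform hypergraph with |V2| = |V3| = |V1| + 1, in which
the edges through each x ∈ V1 form a perfect matching (bijection) between V2
and V3, has a matching covering V1, then every n × n Latin square contains a
partial transversal of size n − 1. -/
theorem stmt_7
    (conjA : ∀ (V1 V2 V3 : Type) [Fintype V1] [Fintype V2] [Fintype V3]
      (H : Set (V1 × V2 × V3)),
      Fintype.card V2 = Fintype.card V1 + 1 →
      Fintype.card V3 = Fintype.card V1 + 1 →
      (∀ x : V1, ∃ σ : V2 ≃ V3, ∀ (v2 : V2) (v3 : V3),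
        (x, v2, v3) ∈ H ↔ σ v2 = v3) →
      ∃ m : V1 → V2 × V3, (∀ x, (x, m x) ∈ H) ∧
        ∀ x y, x ≠ y → (m x).1 ≠ (m y).1 ∧ (m x).2 ≠ (m y).2)
    (n : ℕ) (L : Fin n × Fin n → Fin n)
    (hrow : ∀ i : Fin n, Function.Injective fun j => L (i, j))
    (hcol : ∀ j : Fin n, Function.Injective fun i => L (i, j)) :
    ∃ T : Finset (Fin n × Fin n), T.card = n - 1 ∧
      ∀ c ∈ T, ∀ c' ∈ T, c ≠ c' →
        c.1 ≠ c'.1 ∧ c.2 ≠ c'.2 ∧ L c ≠ L c' :=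
  stmt_7_general conjA n L hrow
end

section
/- The distortion-colouring problem for bipartite multigraphs restricted to instances where each side consists of a single vertex is equivalent to the following: given d permutations r_1,...,r_d of {0,1,...,d}, there exist d pairwise distinct colours c_1,...,c_d ∈ {0,...,d} such that r_1(c_1),...,r_d(c_d) are pairwise distinct. Show that this statement follows from Conjecture A on 3-partite 3-uniform hypergraphs (with |V1| = d, |V2| = |V3| = d+1). -/
def permHypergraph {ι α β : Type*} (r : ι → α ≃ β) : Set (ι × α × β) :=
  {p | r p.1 p.2.1 = p.2.2}

theorem injective_and_injective_of_permHypergraph_matching {ι α β : Type*} {r : ι → α ≃ β}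
    {m : ι → α × β} (hm : ∀ i, (i, m i) ∈ permHypergraph r)
    (hdisj : ∀ i j, i ≠ j → (m i).1 ≠ (m j).1 ∧ (m i).2 ≠ (m j).2) :
    Function.Injective (fun i => (m i).1) ∧ Function.Injective fun i => r i (m i).1 := by
  constructor
  · intro i j h
    by_contra hne
    exact (hdisj i j hne).1 h
  · intro i j h
    by_contra hne
    have hi : r i (m i).1 = (m i).2 := hm i
    have hj : r j (m j).1 = (m j).2 := hm j
    exact (hdisj i j hne).2 (hi ▸ hj ▸ h)

/-- Conjecture A implies the single-vertex-pair case of the distortion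
colouring problem: for any d permutations r_1,…,r_d of {0,…,d} there are
pairwise distinct colours c_1,…,c_d with r_1(c_1),…,r_d(c_d) pairwise
distinct. -/
theorem stmt_8
    (conjA : ∀ (V1 V2 V3 : Type) [Fintype V1] [Fintype V2] [Fintype V3]
      (H : Set (V1 × V2 × V3)),
      Fintype.card V2 = Fintype.card V1 + 1 →
      Fintype.card V3 = Fintype.card V1 + 1 →
      (∀ x : V1, ∃ σ : V2 ≃ V3, ∀ (v2 : V2) (v3 : V3),
        (x, v2, v3) ∈ H ↔ σ v2 = v3) →
      ∃ m : V1 → V2 × V3, (∀ x, (x, m x) ∈ H) ∧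
        ∀ x y, x ≠ y → (m x).1 ≠ (m y).1 ∧ (m x).2 ≠ (m y).2)
    (d : ℕ) (r : Fin d → Equiv.Perm (Fin (d + 1))) :
    ∃ c : Fin d → Fin (d + 1), Function.Injective c ∧
      Function.Injective fun i => r i (c i) := by
  obtain ⟨m, hm, hdisj⟩ := conjA (Fin d) (Fin (d + 1)) (Fin (d + 1)) (permHypergraph r)
    (by simp) (by simp) fun i => ⟨r i, fun _ _ => Iff.rfl⟩
  exact ⟨_, injective_and_injective_of_permHypergraph_matching hm hdisj⟩
end

section
/- Let C = v_0 e_1 v_1 e_2 ... e_{2k} v_0 be an even cycle (length at least 4) whose edges each carry a permutation of {0,1,2,3}, and suppose each edge e is given a list L_e ⊆ {0,1,2,3} of allowed colours with |L_e| ≥ 2 for all e. Suppose moreover there are two consecutive edges e, e' of C (sharing a vertex v) with L_e ≠ L_{e'} and L_e ∩ L_{e'} ≠ ∅. Then C admits a proper colouring from the lists, i.e., an assignment f with f(e) ∈ L_e for all e such that consecutive edges of C receive distinct colours. -/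
/-!
Colour the cycle greedily, starting at an edge `e` whose list contains a colour `a` missing from
the list of the edge `e'` preceding it. Give `e` the colour `a`, and walk once around the cycle,
giving each further edge a colour of its list different from that of the previous edge: a list
of size at least two always has one. The only constraint not checked along the way is the one
between `e'` and `e`, and it holds because the colour of `e'` lies in `L e'`, which misses `a`.
-/

def CycleListColorable {n : ℕ} {α : Type*} (L : ZMod n → Finset α) : Prop :=
  ∃ f : ZMod n → α, ∀ i, f i ∈ L i ∧ f i ≠ f (i + 1)

namespace CycleListColorable

variable {n : ℕ} {α : Type*} {L : ZMod n → Finset α}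

theorem of_comp_add (d : ZMod n) (h : CycleListColorable fun j => L (d + j)) :
    CycleListColorable L := by
  obtain ⟨f, hf⟩ := h
  refine ⟨fun j => f (j - d), fun j => ?_⟩
  simpa only [add_sub_cancel, sub_add_eq_add_sub] using hf (j - d)

theorem of_comp_neg (h : CycleListColorable fun j => L (-j)) : CycleListColorable L := by
  obtain ⟨f, hf⟩ := h
  refine ⟨fun j => f (-j), fun j => ⟨by simpa using (hf (-j)).1, ?_⟩⟩
  have hj := (hf (-j - 1)).2
  rw [sub_add_cancel, ← neg_add'] at hj
  exact hj.symm

end CycleListColorable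

theorem exists_seq_mem_ne_succ {α : Type*} (L : ℕ → Finset α) (hL : ∀ m, 2 ≤ (L m).card)
    {a : α} (ha : a ∈ L 0) :
    ∃ g : ℕ → α, g 0 = a ∧ ∀ m, g m ∈ L m ∧ g (m + 1) ≠ g m := by
  choose next hnext_mem hnext_ne using fun m b => (L (m + 1)).exists_mem_ne (hL (m + 1)) b
  let g : ℕ → α := fun m => Nat.rec a (fun m b => next m b) m
  refine ⟨g, rfl, fun m => ⟨?_, hnext_ne m (g m)⟩⟩
  cases m with
  | zero => exact ha
  | succ m => exact hnext_mem m (g m)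

theorem ZMod.val_add_one_of_ne_neg_one {n : ℕ} [NeZero n] {i : ZMod n} (hi : i ≠ -1) :
    (i + 1).val = i.val + 1 := by
  have hcast : i + 1 = ((i.val + 1 : ℕ) : ZMod n) := by
    rw [Nat.cast_succ, ZMod.natCast_zmod_val]
  have hlt : i.val + 1 < n := by
    refine lt_of_le_of_ne (ZMod.val_lt i) fun hn => hi ?_
    rw [hn, ZMod.natCast_self] at hcast
    exact eq_neg_of_add_eq_zero_left hcast
  rw [hcast, ZMod.val_natCast_of_lt hlt]

theorem cycleListColorable_of_mem_of_notMem {n : ℕ} [NeZero n] {α : Type*}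
    {L : ZMod n → Finset α} (hL : ∀ i, 2 ≤ (L i).card) {c : ZMod n} {a : α}
    (ha : a ∈ L c) (ha' : a ∉ L (c - 1)) : CycleListColorable L := by
  refine CycleListColorable.of_comp_add c ?_
  obtain ⟨g, hg0, hg⟩ :=
    exists_seq_mem_ne_succ (fun m => L (c + m)) (fun m => hL _) (by simpa using ha)
  refine ⟨fun i => g i.val, fun i => ⟨by simpa using (hg i.val).1, ?_⟩⟩
  by_cases hi : i = -1
  · subst hi
    have hlast := (hg (-1 : ZMod n).val).1
    simp only [ZMod.natCast_zmod_val, ← sub_eq_add_neg] at hlast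
    show g (-1 : ZMod n).val ≠ g (-1 + 1 : ZMod n).val
    rw [neg_add_cancel, ZMod.val_zero, hg0]
    exact fun h => ha' (h ▸ hlast)
  · show g i.val ≠ g (i + 1).val
    rw [ZMod.val_add_one_of_ne_neg_one hi]
    exact (hg i.val).2.symm

theorem cycleListColorable_of_ne {n : ℕ} [NeZero n] {α : Type*} {L : ZMod n → Finset α}
    (hL : ∀ i, 2 ≤ (L i).card) {i : ZMod n} (hne : L i ≠ L (i + 1)) : CycleListColorable L := by
  by_cases hsub : L (i + 1) ⊆ L i
  · obtain ⟨a, ha, ha'⟩ := Finset.not_subset.mp fun h => hne (h.antisymm hsub)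
    refine CycleListColorable.of_comp_neg
      (cycleListColorable_of_mem_of_notMem (c := -i) (a := a) (fun j => hL _) ?_ ?_)
    · simpa using ha
    · simpa [← neg_add'] using ha'
  · obtain ⟨a, ha, ha'⟩ := Finset.not_subset.mp hsub
    exact cycleListColorable_of_mem_of_notMem hL ha (by rwa [add_sub_cancel_right])

/-- List edge colouring of an even cycle of length 2k ≥ 4: if every edge has
a list of size at least 2 from {0,1,2,3}, and some two consecutive edges have
unequal but intersecting lists, then the cycle admits a proper colouring
from the lists (consecutive edges coloured differently). Edges are indexed
by ℤ/2k, with edges i and i+1 consecutive. -/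
theorem stmt_10 (k : ℕ) (hk : 2 ≤ k)
    (L : ZMod (2 * k) → Finset (Fin 4))
    (hsize : ∀ i, 2 ≤ (L i).card)
    (hgood : ∃ i, L i ≠ L (i + 1) ∧ (L i ∩ L (i + 1)).Nonempty) :
    ∃ f : ZMod (2 * k) → Fin 4, ∀ i, f i ∈ L i ∧ f i ≠ f (i + 1) := by
  have : NeZero (2 * k) := ⟨by omega⟩
  obtain ⟨i, hne, -⟩ := hgood
  exact cycleListColorable_of_ne hsize hne
end

section
/- Let G be a cubic (3-regular) bipartite multigraph with classes A, B and edge distortions r_e over {0,1,2,3}, and let M, M', M'' be a decomposition of E(G) into three perfect matchings. Let C be a cycle of the 2-factor M' ∪ M''. Then there is a 4-colouring f_A of the edges of M incident with C ∩ A such that for every 4-colouring f_B of the edges of M \ M_{C∩A} incident with B-vertices of C, there is a 4-colouring f_C of E(C) making f_A ∪ f_B ∪ f_C a proper distortion-colouring of the edges of M_{C∩A} ∪ M_{C∩B} ∪ E(C). -/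
/-!
Once the `M`-edges at `C` are coloured, each edge of `C` loses at most one colour at its `A`-end
and one (through its distortion) at its `B`-end, so it keeps a list of at least two of the four
colours; colouring `C` is then a DP-colouring of an even cycle with lists of size two. Colouring
greedily backwards around the cycle from an edge `q` succeeds as soon as some colour `t` of its
`B`-neighbour `p` forbids at `q` only a colour missing from the list of `q` anyway, or that list
has three colours. `f_A` arranges this whatever `f_B` is: it gives the `M`-edges at the `A`-ends
of `q` and `p` colours `a_q`, `a_p` with `r_q(a_q) ≠ r_p(a_p)`, and `t` is the colour with
`r_p(t) = r_q(a_q)`. This is possible when `p` and `q` have different `A`-ends, and when `C` is a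
2-cycle of parallel edges with `r_p ≠ r_q`; if `r_p = r_q` the two constraints of the 2-cycle
coincide and any two colours of the common list will do.
-/

open Finset Function

namespace DistortionColouring

section ListColouring

variable {C : Type*} (L : ℕ → Finset C) (σ : ℕ → Equiv.Perm C)

theorem exists_path_colouring :
    ∀ k, (∀ i < k, 2 ≤ (L i).card) → ∀ t, ∃ f : ℕ → C,
      f k = t ∧ ∀ i < k, f i ∈ L i ∧ σ i (f i) ≠ f (i + 1)
  | 0, _, t => ⟨fun _ => t, rfl, by simp⟩
  | k + 1, hL, t => by
    obtain ⟨s, hs, hst⟩ := (L k).exists_mem_ne (hL k k.lt_succ_self) ((σ k).symm t)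
    obtain ⟨f, hfk, hf⟩ := exists_path_colouring k (fun i hi => hL i (by omega)) s
    refine ⟨update f (k + 1) t, by simp, fun i hi => ?_⟩
    rcases Nat.lt_succ_iff_lt_or_eq.mp hi with hi | rfl
    · simp only [update_of_ne (show i ≠ k + 1 by omega),
        update_of_ne (show i + 1 ≠ k + 1 by omega)]
      exact hf i hi
    · rw [update_of_ne (show i ≠ i + 1 by omega), update_self, hfk]
      exact ⟨hs, fun h => hst (by rw [← h, Equiv.symm_apply_apply])⟩

/-- A cycle of length `n` is encoded by `n`-periodic data, vertex `i` being joined to `i + 1`. -/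
theorem exists_periodic_colouring [DecidableEq C] {n : ℕ} (hn : 2 ≤ n) (hL : Periodic L n)
    (hσ : Periodic σ n) (hcard : ∀ i, 2 ≤ (L i).card)
    (hseam : ∃ t ∈ L (n - 1), 2 ≤ ((L 0).erase (σ (n - 1) t)).card) :
    ∃ f : ℕ → C, Periodic f n ∧ ∀ i, f i ∈ L i ∧ σ i (f i) ≠ f (i + 1) := by
  obtain ⟨t, ht, hseam⟩ := hseam
  obtain ⟨f, hft, hf⟩ := exists_path_colouring (update L 0 ((L 0).erase (σ (n - 1) t))) σ
    (n - 1) (fun i _ => by rcases eq_or_ne i 0 with rfl | hi <;> simp [*]) t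
  have hf0 : f 0 ≠ σ (n - 1) t ∧ f 0 ∈ L 0 := by simpa using (hf 0 (by omega)).1
  have hfL : ∀ j < n - 1, f j ∈ L j := fun j hj => by
    have := (hf j hj).1
    rcases eq_or_ne j 0 with rfl | hj0 <;> simp_all
  refine ⟨fun i => f (i % n), fun i => by simp, fun i => ?_⟩
  rw [← hL.map_mod_nat, ← hσ.map_mod_nat]
  have hi : i % n < n := Nat.mod_lt _ (by omega)
  rcases Nat.lt_or_ge (i % n) (n - 1) with hlt | hge
  · have hsucc : (i + 1) % n = i % n + 1 := by
      rw [Nat.add_mod, Nat.mod_eq_of_lt (show 1 < n by omega), Nat.mod_eq_of_lt (by omega)]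
    simpa [hsucc] using And.intro (hfL _ hlt) (hf _ hlt).2
  · have hlast : i % n = n - 1 := by omega
    have hsucc : (i + 1) % n = 0 := by
      rw [Nat.add_mod, hlast, Nat.mod_eq_of_lt (show 1 < n by omega),
        Nat.sub_add_cancel (by omega), Nat.mod_self]
    simp only [hlast, hsucc, hft]
    exact ⟨ht, fun h => hf0.1 h.symm⟩

end ListColouring

section AlternatingWalk

variable {E : Type*} (α β : E → E)

def alternatingWalk (x : E) : ℕ → E
  | 0 => x
  | i + 1 => if Even i then α (alternatingWalk x i) else β (alternatingWalk x i)

variable {α β} {x : E}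

@[simp]
theorem alternatingWalk_zero : alternatingWalk α β x 0 = x := rfl

theorem alternatingWalk_succ_of_even {i : ℕ} (hi : Even i) :
    alternatingWalk α β x (i + 1) = α (alternatingWalk α β x i) := if_pos hi

theorem alternatingWalk_succ_of_odd {i : ℕ} (hi : Odd i) :
    alternatingWalk α β x (i + 1) = β (alternatingWalk α β x i) :=
  if_neg (Nat.not_even_iff_odd.mpr hi)

theorem alternatingWalk_two_mul (k : ℕ) : alternatingWalk α β x (2 * k) = (β ∘ α)^[k] x := by
  induction k with
  | zero => rfl
  | succ k ih =>
    rw [show 2 * (k + 1) = 2 * k + 1 + 1 by ring, alternatingWalk_succ_of_odd (by simp),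
      alternatingWalk_succ_of_even (by simp), ih, iterate_succ_apply']
    rfl

theorem alternatingWalk_two_mul_add_one (k : ℕ) :
    alternatingWalk α β x (2 * k + 1) = α ((β ∘ α)^[k] x) := by
  rw [alternatingWalk_succ_of_even (by simp), alternatingWalk_two_mul]

theorem alternatingWalk_periodic {p : ℕ} (hp : (β ∘ α)^[p] x = x) :
    Periodic (alternatingWalk α β x) (2 * p) := by
  intro i
  induction i with
  | zero => rw [zero_add, alternatingWalk_two_mul, hp]; rfl
  | succ i ih =>
    rw [show i + 1 + 2 * p = i + 2 * p + 1 by ring]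
    rcases Nat.even_or_odd i with hi | hi
    · rw [alternatingWalk_succ_of_even hi,
        alternatingWalk_succ_of_even (hi.add (even_two_mul p)), ih]
    · rw [alternatingWalk_succ_of_odd hi,
        alternatingWalk_succ_of_odd (hi.add_even (even_two_mul p)), ih]

theorem rel_apply_fst_of_even_steps (hα : Involutive α) {R : E → E → Prop}
    (hR : ∀ a b, R a b → R b a)
    (h : ∀ j, Even j → R (alternatingWalk α β x j) (alternatingWalk α β x (j + 1))) (i : ℕ) :
    R (alternatingWalk α β x i) (α (alternatingWalk α β x i)) := by
  rcases Nat.even_or_odd i with hi | ⟨j, rfl⟩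
  · simpa [alternatingWalk_succ_of_even hi] using h i hi
  · have hj := h (2 * j) (even_two_mul j)
    rw [alternatingWalk_succ_of_even (even_two_mul j)] at hj ⊢
    rw [hα]
    exact hR _ _ hj

theorem rel_apply_snd_of_odd_steps (hβ : Involutive β) {n : ℕ} (hn : Even n) (hn0 : 0 < n)
    (hper : Periodic (alternatingWalk α β x) n) {R : E → E → Prop} (hR : ∀ a b, R a b → R b a)
    (h : ∀ j, Odd j → R (alternatingWalk α β x j) (alternatingWalk α β x (j + 1))) (i : ℕ) :
    R (alternatingWalk α β x i) (β (alternatingWalk α β x i)) := by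
  rcases Nat.even_or_odd i with hi | hi
  · have hj : Odd (i + n - 1) := by
      obtain ⟨a, rfl⟩ := hi; obtain ⟨b, rfl⟩ := hn; exact ⟨a + b - 1, by omega⟩
    have hprev : alternatingWalk α β x (i + n - 1 + 1) = alternatingWalk α β x i := by
      rw [Nat.sub_add_cancel (by omega), hper]
    have hβi : β (alternatingWalk α β x i) = alternatingWalk α β x (i + n - 1) := by
      rw [← hprev, alternatingWalk_succ_of_odd hj, hβ]
    rw [hβi]
    exact hR _ _ (hprev ▸ h _ hj)
  · simpa [alternatingWalk_succ_of_odd hi] using h i hi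

/-- With `φ = β ∘ α`: if `α` mapped a point of the `φ`-orbit of `x` into the orbit, then
`α x = φ^[s] x` and `φ^[⌈s / 2⌉] x` would be a fixed point of `α` (`s` even) or of `β` (`s` odd). -/
theorem apply_iterate_ne_iterate (hα : Involutive α) (hβ : Involutive β)
    (hfix : ∀ k, α ((β ∘ α)^[k] x) ≠ (β ∘ α)^[k] x ∧ β ((β ∘ α)^[k] x) ≠ (β ∘ α)^[k] x)
    (a b : ℕ) : α ((β ∘ α)^[b] x) ≠ (β ∘ α)^[a] x := by
  have hinv : LeftInverse (α ∘ β) (β ∘ α) := fun y => by simp [hβ (α y), hα y]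
  have hαφ : Semiconj α (β ∘ α) (α ∘ β) := fun _ => rfl
  have hαψ : Semiconj α (α ∘ β) (β ∘ α) := fun y => by simp [hα (β y), hα y]
  intro h
  have hx : α x = (β ∘ α)^[a + b] x := by
    calc α x = α ((α ∘ β)^[b] ((β ∘ α)^[b] x)) := by rw [hinv.iterate b]
      _ = (β ∘ α)^[b] (α ((β ∘ α)^[b] x)) := (hαψ.iterate_right b) _
      _ = (β ∘ α)^[a + b] x := by rw [h, ← iterate_add_apply, add_comm]
  obtain ⟨u, hu | hu⟩ := Nat.even_or_odd' (a + b)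
  · apply (hfix u).1
    rw [(hαφ.iterate_right u) x, hx, hu, two_mul, iterate_add_apply, hinv.iterate u]
  · apply (hfix (u + 1)).2
    conv_lhs => rw [← hα ((β ∘ α)^[u + 1] x)]
    rw [(hαφ.iterate_right (u + 1)) x, hx, hu, show 2 * u + 1 = (u + 1) + u by ring,
      iterate_add_apply (β ∘ α) (u + 1) u, hinv.iterate (u + 1)]
    exact (iterate_succ_apply' (β ∘ α) u x).symm

theorem alternatingWalk_injOn (hα : Involutive α) (hβ : Involutive β)
    (hfix : ∀ k, α ((β ∘ α)^[k] x) ≠ (β ∘ α)^[k] x ∧ β ((β ∘ α)^[k] x) ≠ (β ∘ α)^[k] x) :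
    Set.InjOn (alternatingWalk α β x) (Set.Iio (2 * minimalPeriod (β ∘ α) x)) := by
  have hφ : ∀ a b, a < minimalPeriod (β ∘ α) x → b < minimalPeriod (β ∘ α) x →
      (β ∘ α)^[a] x = (β ∘ α)^[b] x → a = b := fun a b ha hb h =>
    iterate_injOn_Iio_minimalPeriod ha hb h
  intro i hi j hj hij
  simp only [Set.mem_Iio] at hi hj
  obtain ⟨a, rfl | rfl⟩ := Nat.even_or_odd' i <;> obtain ⟨b, rfl | rfl⟩ := Nat.even_or_odd' j <;>
    simp only [alternatingWalk_two_mul, alternatingWalk_two_mul_add_one] at hij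
  · rw [hφ a b (by omega) (by omega) hij]
  · exact absurd hij.symm (apply_iterate_ne_iterate hα hβ hfix a b)
  · exact absurd hij (apply_iterate_ne_iterate hα hβ hfix b a)
  · rw [hφ a b (by omega) (by omega) (hα.injective hij)]

theorem alternatingWalk_sub_one {n : ℕ} (hβ : Involutive β) (hn : Even n) (hn0 : 0 < n)
    (hper : Periodic (alternatingWalk α β x) n) : alternatingWalk α β x (n - 1) = β x := by
  have hodd : Odd (n - 1) := by obtain ⟨k, rfl⟩ := hn; exact ⟨k - 1, by omega⟩
  have h := alternatingWalk_succ_of_odd (α := α) (β := β) (x := x) hodd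
  have h0 : alternatingWalk α β x n = x := by simpa using hper 0
  rw [Nat.sub_add_cancel hn0, h0] at h
  exact ((congrArg β h).trans (hβ _)).symm

theorem mem_range_alternatingWalk (hα : Involutive α) (hβ : Involutive β) {n : ℕ} (hn : Even n)
    (hn0 : 0 < n) (hper : Periodic (alternatingWalk α β x) n) {y : E}
    (h : Relation.ReflTransGen (fun x y => y = α x ∨ y = β x) x y) :
    y ∈ Set.range (alternatingWalk α β x) := by
  induction h with
  | refl => exact ⟨0, rfl⟩
  | tail _ hstep ih =>
    obtain ⟨i, rfl⟩ := ih
    set R : E → E → Prop := fun a b =>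
      a ∈ Set.range (alternatingWalk α β x) ∧ b ∈ Set.range (alternatingWalk α β x)
    have hR : ∀ a b, R a b → R b a := fun _ _ => And.symm
    have hwalk : ∀ j, R (alternatingWalk α β x j) (alternatingWalk α β x (j + 1)) :=
      fun j => ⟨⟨j, rfl⟩, j + 1, rfl⟩
    rcases hstep with rfl | rfl
    · exact (rel_apply_fst_of_even_steps hα hR (fun j _ => hwalk j) i).2
    · exact (rel_apply_snd_of_odd_steps hβ hn hn0 hper hR (fun j _ => hwalk j) i).2

end AlternatingWalk

section CycleColouring

variable {E C : Type*}

def IsCycleColouring (S : Finset E) (α β : E → E) (L : E → Finset C) (ρ : E → Equiv.Perm C)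
    (F : E → C) : Prop :=
  ∀ x ∈ S, F x ∈ L x ∧ F x ≠ F (α x) ∧ ρ x (F x) ≠ ρ (β x) (F (β x))

theorem exists_comp_eq_of_periodic {w : ℕ → E} {f : ℕ → C} {n : ℕ} (hn : 0 < n)
    (hw : Periodic w n) (hinj : Set.InjOn w (Set.Iio n)) (hf : Periodic f n) :
    ∃ F : E → C, ∀ i, F (w i) = f i := by
  have hwd : ∀ i j, w i = w j → f i = f j := fun i j h => by
    rw [← hf.map_mod_nat i, ← hf.map_mod_nat j]
    congr 1
    apply hinj (Nat.mod_lt _ hn) (Nat.mod_lt _ hn)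
    rwa [hw.map_mod_nat, hw.map_mod_nat]
  exact ⟨fun y => f (invFun w y), fun i => hwd _ _ (invFun_eq ⟨i, rfl⟩)⟩

theorem isCycleColouring_of_alternatingWalk {S : Finset E} {α β : E → E} {x₀ : E} {n : ℕ}
    (hα : Involutive α) (hβ : Involutive β) (hn : Even n) (hn0 : 0 < n)
    (hper : Periodic (alternatingWalk α β x₀) n)
    (hS : ∀ y ∈ S, y ∈ Set.range (alternatingWalk α β x₀)) {L : E → Finset C}
    {ρ : E → Equiv.Perm C} {F : E → C}
    (hL : ∀ i, F (alternatingWalk α β x₀ i) ∈ L (alternatingWalk α β x₀ i))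
    (hαstep : ∀ j, Even j → F (alternatingWalk α β x₀ j) ≠ F (alternatingWalk α β x₀ (j + 1)))
    (hβstep : ∀ j, Odd j → ρ (alternatingWalk α β x₀ j) (F (alternatingWalk α β x₀ j)) ≠
      ρ (alternatingWalk α β x₀ (j + 1)) (F (alternatingWalk α β x₀ (j + 1)))) :
    IsCycleColouring S α β L ρ F := by
  intro y hy
  obtain ⟨i, rfl⟩ := hS y hy
  exact ⟨hL i, rel_apply_fst_of_even_steps hα (R := fun a b => F a ≠ F b)
      (fun _ _ => Ne.symm) hαstep i,
    rel_apply_snd_of_odd_steps hβ hn hn0 hper (R := fun a b => ρ a (F a) ≠ ρ b (F b))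
      (fun _ _ => Ne.symm) hβstep i⟩

theorem exists_isCycleColouring [Finite E] [DecidableEq C] {S : Finset E} {α β : E → E}
    (hα : Involutive α) (hβ : Involutive β) (hαS : ∀ x ∈ S, α x ∈ S) (hβS : ∀ x ∈ S, β x ∈ S)
    (hα_ne : ∀ x ∈ S, α x ≠ x) (hβ_ne : ∀ x ∈ S, β x ≠ x) {x₀ : E} (hx₀ : x₀ ∈ S)
    (hconn : ∀ y ∈ S, Relation.ReflTransGen (fun x y => y = α x ∨ y = β x) x₀ y)
    (L : E → Finset C) (ρ : E → Equiv.Perm C) (hL : ∀ x ∈ S, 2 ≤ (L x).card)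
    (hseam : ∃ t ∈ L (β x₀), 2 ≤ ((L x₀).erase ((ρ x₀).symm (ρ (β x₀) t))).card) :
    ∃ F, IsCycleColouring S α β L ρ F := by
  set n := 2 * minimalPeriod (β ∘ α) x₀
  set w := alternatingWalk α β x₀
  have hn0 : 0 < n := Nat.mul_pos two_pos <|
    minimalPeriod_pos_of_mem_periodicPts ((hβ.injective.comp hα.injective).mem_periodicPts x₀)
  have hn : Even n := even_two_mul _
  have hper : Periodic w n := alternatingWalk_periodic iterate_minimalPeriod
  have horbit : ∀ k, (β ∘ α)^[k] x₀ ∈ S := fun k =>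
    Set.MapsTo.iterate (f := β ∘ α) (s := S) (fun y hy => hβS _ (hαS _ hy)) k hx₀
  have hwS : ∀ i, w i ∈ S := by
    intro i
    obtain ⟨k, rfl | rfl⟩ := Nat.even_or_odd' i
    · simpa only [w, alternatingWalk_two_mul] using horbit k
    · simpa only [w, alternatingWalk_two_mul_add_one] using hαS _ (horbit k)
  -- the constraint between the `i`-th and `(i+1)`-st edge of the walk
  set σ : ℕ → Equiv.Perm C := fun i =>
    if Even i then 1 else (ρ (w i)).trans (ρ (w (i + 1))).symm with hσ
  have hσper : Periodic σ n := fun i => by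
    simp only [hσ, Nat.even_add, hn, iff_true, hper i, show i + n + 1 = i + 1 + n by ring,
      hper (i + 1)]
  have hodd : ¬Even (n - 1) := by
    rw [Nat.not_even_iff_odd]; obtain ⟨k, hk⟩ := hn; exact ⟨k - 1, by omega⟩
  obtain ⟨f, hfper, hf⟩ := exists_periodic_colouring (fun i => L (w i)) σ (n := n)
    (by omega) (fun i => by simp only [hper i]) hσper (fun i => hL _ (hwS i)) (by
      simpa [hσ, hodd, alternatingWalk_sub_one hβ hn hn0 hper, Nat.sub_add_cancel hn0,
        show w n = x₀ by simpa using hper 0, w] using hseam)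
  obtain ⟨F, hF⟩ := exists_comp_eq_of_periodic hn0 hper
    (alternatingWalk_injOn hα hβ fun k => ⟨hα_ne _ (horbit k), hβ_ne _ (horbit k)⟩) hfper
  simp only [w] at hF hf
  refine ⟨F, isCycleColouring_of_alternatingWalk hα hβ hn hn0 hper
    (fun y hy => mem_range_alternatingWalk hα hβ hn hn0 hper (hconn y hy))
    (fun i => by simpa [hF] using (hf i).1) (fun j hj => ?_) (fun j hj => ?_)⟩
  · simpa [hF, hσ, hj] using (hf j).2
  · have := (hf j).2
    simp only [hσ, Nat.not_even_iff_odd.mpr hj, if_false, Equiv.trans_apply] at this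
    rwa [hF, hF, Ne, ← Equiv.symm_apply_eq]

theorem exists_isCycleColouring_of_parallel {S : Finset E} {α β : E → E}
    {L : E → Finset C} {ρ : E → Equiv.Perm C} {p q : E} (hS : ∀ x ∈ S, x = p ∨ x = q)
    (hpq : p ≠ q) (hαp : α p = q) (hαq : α q = p) (hβp : β p = q) (hβq : β q = p)
    (hρ : ρ p = ρ q) (hL : L p = L q) (hcard : 2 ≤ (L p).card) :
    ∃ F, IsCycleColouring S α β L ρ F := by
  classical
  obtain ⟨c, hc, d, hd, hcd⟩ := one_lt_card.mp hcard
  refine ⟨fun y => if y = p then c else d, fun y hy => ?_⟩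
  rcases hS y hy with rfl | rfl
  · simp [hαp, hβp, hpq.symm, hc, hcd, hρ]
  · simp [hαq, hβq, hpq.symm, ← hL, hd, hcd.symm, hρ]

end CycleColouring

section Partner

variable {E K : Type*} (S : Finset E) (key : E → K)

open Classical in
/-- The other element of `S` with the same key as `x ∈ S`. It is the identity off `S`, which makes
it an involution of `E` when every key occurring in `S` occurs exactly twice. -/
noncomputable def partner (x : E) : E :=
  if h : x ∈ S ∧ ∃ y ∈ S, y ≠ x ∧ key y = key x then h.2.choose else x

variable {S key}

theorem partner_of_notMem {x : E} (hx : x ∉ S) : partner S key x = x := by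
  classical
  rw [partner, dif_neg (fun h => hx h.1)]

variable [DecidableEq K]

theorem partner_spec (hreg : ∀ x ∈ S, (S.filter fun e => key e = key x).card = 2) {x : E}
    (hx : x ∈ S) : partner S key x ∈ S ∧ partner S key x ≠ x ∧ key (partner S key x) = key x := by
  classical
  obtain ⟨y, hy, hyx⟩ := exists_mem_ne (by rw [hreg x hx]; norm_num) x
  have h : x ∈ S ∧ ∃ y ∈ S, y ≠ x ∧ key y = key x :=
    ⟨hx, y, (mem_filter.mp hy).1, hyx, (mem_filter.mp hy).2⟩
  rw [partner, dif_pos h]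
  exact h.2.choose_spec

theorem eq_or_eq_partner (hreg : ∀ x ∈ S, (S.filter fun e => key e = key x).card = 2) {x y : E}
    (hx : x ∈ S) (hy : y ∈ S) (hxy : key y = key x) : y = x ∨ y = partner S key x := by
  classical
  obtain ⟨hpS, hpx, hpkey⟩ := partner_spec hreg hx
  have hpair : S.filter (fun e => key e = key x) = {x, partner S key x} := by
    refine (eq_of_subset_of_card_le (fun e he => ?_) ?_).symm
    · rcases mem_insert.mp he with rfl | he
      · exact mem_filter.mpr ⟨hx, rfl⟩
      · exact mem_filter.mpr ⟨(mem_singleton.mp he) ▸ hpS, (mem_singleton.mp he) ▸ hpkey⟩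
    · rw [hreg x hx, card_pair hpx.symm]
  have hy' : y ∈ S.filter (fun e => key e = key x) := mem_filter.mpr ⟨hy, hxy⟩
  simpa [hpair] using hy'

theorem partner_involutive (hreg : ∀ x ∈ S, (S.filter fun e => key e = key x).card = 2) :
    Involutive (partner S key) := by
  intro x
  by_cases hx : x ∈ S
  · obtain ⟨hpS, hpx, hpkey⟩ := partner_spec hreg hx
    obtain ⟨hppS, hppx, hppkey⟩ := partner_spec hreg hpS
    exact (eq_or_eq_partner hreg hx hppS (hppkey.trans hpkey)).resolve_right hppx
  · rw [partner_of_notMem hx, partner_of_notMem hx]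

end Partner

section IsCycle

variable {A B E : Type*} [DecidableEq A] [DecidableEq B]

structure IsCycle (ea : E → A) (eb : E → B) (S : Finset E) : Prop where
  regular_fst : ∀ x ∈ S, (S.filter fun e => ea e = ea x).card = 2
  regular_snd : ∀ x ∈ S, (S.filter fun e => eb e = eb x).card = 2
  connected : ∀ x ∈ S, ∀ y ∈ S,
    Relation.ReflTransGen (fun x y => x ∈ S ∧ y ∈ S ∧ (ea x = ea y ∨ eb x = eb y)) x y

theorem IsCycle.reflTransGen_partner {ea : E → A} {eb : E → B} {S : Finset E}
    (hS : IsCycle ea eb S) {x y : E} (hx : x ∈ S) (hy : y ∈ S) :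
    Relation.ReflTransGen (fun x y => y = partner S ea x ∨ y = partner S eb x) x y := by
  have h := hS.connected x hx y hy
  clear hy
  induction h with
  | refl => exact .refl
  | tail _ hstep ih =>
    obtain ⟨hb, hc, hkey | hkey⟩ := hstep
    · rcases eq_or_eq_partner hS.regular_fst hb hc hkey.symm with rfl | h
      exacts [ih, ih.tail (.inl h)]
    · rcases eq_or_eq_partner hS.regular_snd hb hc hkey.symm with rfl | h
      exacts [ih, ih.tail (.inr h)]

end IsCycle

section Lists

variable {A B E C : Type*} [Fintype C] (ea : E → A) (eb : E → B) (r : E → Equiv.Perm C)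

open Classical in
noncomputable def availableColours (M : Set E) (F₀ : E → C) (x : E) : Finset C :=
  univ.filter fun c => ∀ g ∈ M, (ea g = ea x → c ≠ F₀ g) ∧ (eb g = eb x → r x c ≠ r g (F₀ g))

variable {ea eb r} {M : Set E} {F₀ : E → C}

theorem mem_availableColours {x : E} {c : C} : c ∈ availableColours ea eb r M F₀ x ↔
    ∀ g ∈ M, (ea g = ea x → c ≠ F₀ g) ∧ (eb g = eb x → r x c ≠ r g (F₀ g)) := by
  simp [availableColours]

variable [DecidableEq C]

theorem availableColours_eq (hA : Set.InjOn ea M) (hB : Set.InjOn eb M) {x gA gB : E}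
    (hgA : gA ∈ M) (hgAx : ea gA = ea x) (hgB : gB ∈ M) (hgBx : eb gB = eb x) :
    availableColours ea eb r M F₀ x = univ \ {F₀ gA, (r x).symm (r gB (F₀ gB))} := by
  ext c
  simp only [availableColours, mem_filter, mem_univ, true_and, mem_sdiff, mem_insert,
    mem_singleton, not_or, Equiv.eq_symm_apply]
  constructor
  · intro h
    exact ⟨(h gA hgA).1 hgAx, (h gB hgB).2 hgBx⟩
  · rintro ⟨hcA, hcB⟩ g hg
    exact ⟨fun he => hA hg hgA (he.trans hgAx.symm) ▸ hcA,
      fun he => hB hg hgB (he.trans hgBx.symm) ▸ hcB⟩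

theorem two_le_card_availableColours (hC : 4 ≤ Fintype.card C) (hA : Set.BijOn ea M Set.univ)
    (hB : Set.BijOn eb M Set.univ) (x : E) : 2 ≤ (availableColours ea eb r M F₀ x).card := by
  obtain ⟨gA, hgA, hgAx⟩ := hA.surjOn (Set.mem_univ (ea x))
  obtain ⟨gB, hgB, hgBx⟩ := hB.surjOn (Set.mem_univ (eb x))
  rw [availableColours_eq hA.injOn hB.injOn hgA hgAx hgB hgBx]
  have := le_card_sdiff {F₀ gA, (r x).symm (r gB (F₀ gB))} (univ : Finset C)
  have := card_le_two (a := F₀ gA) (b := (r x).symm (r gB (F₀ gB)))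
  rw [card_univ] at *
  omega

/-- The colour `t` of `y₀` with `r y₀ t = r x₀ (F₀ gx)` forbids at `x₀` only `F₀ gx`, which is
not available there anyway; it is available at `y₀` unless the two forbidden colours of `x₀`
coincide. -/
theorem exists_seam_of_distortion_ne (hC : 4 ≤ Fintype.card C) (hA : Set.BijOn ea M Set.univ)
    (hB : Set.BijOn eb M Set.univ) {x₀ y₀ gx gy : E} (heb : eb y₀ = eb x₀) (hgx : gx ∈ M)
    (hgxx : ea gx = ea x₀) (hgy : gy ∈ M) (hgyy : ea gy = ea y₀)
    (hne : r x₀ (F₀ gx) ≠ r y₀ (F₀ gy)) :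
    ∃ t ∈ availableColours ea eb r M F₀ y₀,
      2 ≤ ((availableColours ea eb r M F₀ x₀).erase ((r x₀).symm (r y₀ t))).card := by
  obtain ⟨gB, hgB, hgBx⟩ := hB.surjOn (Set.mem_univ (eb x₀))
  have hLx := availableColours_eq (r := r) (F₀ := F₀) hA.injOn hB.injOn hgx hgxx hgB hgBx
  have hLy := availableColours_eq (r := r) (F₀ := F₀) hA.injOn hB.injOn hgy hgyy hgB
    (hgBx.trans heb.symm)
  by_cases hz : r x₀ (F₀ gx) = r gB (F₀ gB)
  · have h3 : 3 ≤ (availableColours ea eb r M F₀ x₀).card := by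
      rw [hLx, ← hz, Equiv.symm_apply_apply, insert_eq_self.mpr (mem_singleton_self _)]
      have := le_card_sdiff {F₀ gx} (univ : Finset C)
      rw [card_univ, card_singleton] at this
      omega
    obtain ⟨t, ht⟩ := card_pos.mp
      (lt_of_lt_of_le two_pos (two_le_card_availableColours (r := r) (F₀ := F₀) hC hA hB y₀))
    refine ⟨t, ht, ?_⟩
    have := pred_card_le_card_erase (s := availableColours ea eb r M F₀ x₀)
      (a := (r x₀).symm (r y₀ t))
    omega
  · refine ⟨(r y₀).symm (r x₀ (F₀ gx)), ?_, ?_⟩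
    · rw [hLy]
      simp only [mem_sdiff, mem_univ, mem_insert, mem_singleton, true_and, not_or,
        Equiv.symm_apply_eq, Equiv.apply_symm_apply]
      exact ⟨hne, hz⟩
    · rw [Equiv.apply_symm_apply, Equiv.symm_apply_apply, erase_eq_of_notMem (by simp [hLx])]
      exact two_le_card_availableColours hC hA hB x₀

end Lists

section Precolouring

variable {A E C : Type*}

open Classical in
noncomputable def precolouring (S : Finset E) (ea : E → A) (fA fB : E → C) (g : E) : C :=
  if ∃ e ∈ S, ea e = ea g then fA g else fB g

theorem precolouring_of_exists {S : Finset E} {ea : E → A} {fA fB : E → C} {g : E}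
    (h : ∃ e ∈ S, ea e = ea g) : precolouring S ea fA fB g = fA g := by
  classical
  exact if_pos h

theorem precolouring_of_not_exists {S : Finset E} {ea : E → A} {fA fB : E → C} {g : E}
    (h : ¬∃ e ∈ S, ea e = ea g) : precolouring S ea fA fB g = fB g := by
  classical
  exact if_neg h

end Precolouring

section ExtendablePrecolouring

variable {A B E C : Type*} [Finite E] [DecidableEq A] [DecidableEq B] [Fintype C] [DecidableEq C]
  {ea : E → A} {eb : E → B} {r : E → Equiv.Perm C} {M : Set E} {S : Finset E}

theorem exists_isCycleColouring_of_distortion_ne (hC : 4 ≤ Fintype.card C)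
    (hA : Set.BijOn ea M Set.univ) (hB : Set.BijOn eb M Set.univ) (hS : IsCycle ea eb S)
    {F₀ : E → C} {x₀ gx gy : E} (hx₀ : x₀ ∈ S) (hgx : gx ∈ M) (hgxx : ea gx = ea x₀)
    (hgy : gy ∈ M) (hgyy : ea gy = ea (partner S eb x₀))
    (hne : r x₀ (F₀ gx) ≠ r (partner S eb x₀) (F₀ gy)) :
    ∃ F, IsCycleColouring S (partner S ea) (partner S eb) (availableColours ea eb r M F₀) r F :=
  exists_isCycleColouring (partner_involutive hS.regular_fst) (partner_involutive hS.regular_snd)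
    (fun _ hx => (partner_spec hS.regular_fst hx).1)
    (fun _ hx => (partner_spec hS.regular_snd hx).1)
    (fun _ hx => (partner_spec hS.regular_fst hx).2.1)
    (fun _ hx => (partner_spec hS.regular_snd hx).2.1) hx₀
    (fun _ hy => hS.reflTransGen_partner hx₀ hy) _ r
    (fun x _ => two_le_card_availableColours hC hA hB x)
    (exists_seam_of_distortion_ne hC hA hB (partner_spec hS.regular_snd hx₀).2.2 hgx hgxx hgy
      hgyy hne)

theorem exists_extendable_precolouring_of_ea_ne (hC : 4 ≤ Fintype.card C)
    (hA : Set.BijOn ea M Set.univ) (hB : Set.BijOn eb M Set.univ)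
    (hS : IsCycle ea eb S) {x₀ : E} (hx₀ : x₀ ∈ S) (hne : ea (partner S eb x₀) ≠ ea x₀) :
    ∃ fA : E → C, ∀ fB : E → C, ∃ F, IsCycleColouring S (partner S ea) (partner S eb)
      (availableColours ea eb r M (precolouring S ea fA fB)) r F := by
  set y₀ := partner S eb x₀
  obtain ⟨c₀⟩ : Nonempty C := Fintype.card_pos_iff.mp (by omega)
  have : Nontrivial C := Fintype.one_lt_card_iff_nontrivial.mp (by omega)
  obtain ⟨c₁, hc₁⟩ := exists_ne ((r y₀).symm (r x₀ c₀))
  refine ⟨fun g => if ea g = ea y₀ then c₁ else c₀, fun fB => ?_⟩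
  obtain ⟨gx, hgx, hgxx⟩ := hA.surjOn (Set.mem_univ (ea x₀))
  obtain ⟨gy, hgy, hgyy⟩ := hA.surjOn (Set.mem_univ (ea y₀))
  refine exists_isCycleColouring_of_distortion_ne hC hA hB hS hx₀ hgx hgxx hgy hgyy ?_
  rw [precolouring_of_exists ⟨x₀, hx₀, hgxx.symm⟩,
    precolouring_of_exists ⟨y₀, (partner_spec hS.regular_snd hx₀).1, hgyy.symm⟩]
  simp only [hgxx, hgyy, if_pos, Ne.symm hne, if_false]
  rw [Ne, ← Equiv.symm_apply_eq]
  exact hc₁.symm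

theorem exists_extendable_precolouring_of_ea_eq (hC : 4 ≤ Fintype.card C)
    (hA : Set.BijOn ea M Set.univ) (hB : Set.BijOn eb M Set.univ)
    (hS : IsCycle ea eb S) {x₀ : E} (hx₀ : x₀ ∈ S) (heq : ∀ x ∈ S, ea (partner S eb x) = ea x) :
    ∃ fA : E → C, ∀ fB : E → C, ∃ F, IsCycleColouring S (partner S ea) (partner S eb)
      (availableColours ea eb r M (precolouring S ea fA fB)) r F := by
  set y₀ := partner S eb x₀
  obtain ⟨hy₀S, hy₀ne, hy₀eb⟩ : y₀ ∈ S ∧ y₀ ≠ x₀ ∧ eb y₀ = eb x₀ :=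
    partner_spec hS.regular_snd hx₀
  have hy₀ea : ea y₀ = ea x₀ := heq x₀ hx₀
  have hαx₀ : partner S ea x₀ = y₀ :=
    ((eq_or_eq_partner hS.regular_fst hx₀ hy₀S hy₀ea).resolve_left hy₀ne).symm
  obtain ⟨gx, hgx, hgxx⟩ := hA.surjOn (Set.mem_univ (ea x₀))
  by_cases hr : r x₀ = r y₀
  · obtain ⟨c₀⟩ : Nonempty C := Fintype.card_pos_iff.mp (by omega)
    refine ⟨fun _ => c₀, fun fB => ?_⟩
    have hαy₀ : partner S ea y₀ = x₀ := hαx₀ ▸ partner_involutive hS.regular_fst x₀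
    have hβy₀ : partner S eb y₀ = x₀ := partner_involutive hS.regular_snd x₀
    have hpair : ∀ x ∈ S, x = x₀ ∨ x = y₀ := by
      intro x hx
      have hpath := hS.reflTransGen_partner hx₀ hx
      clear hx
      induction hpath with
      | refl => exact .inl rfl
      | tail _ hstep ih =>
        rcases ih with rfl | rfl <;> rcases hstep with rfl | rfl <;> simp [hαx₀, hαy₀, hβy₀, y₀]
    refine exists_isCycleColouring_of_parallel hpair hy₀ne.symm hαx₀ hαy₀ rfl hβy₀ hr ?_
      (two_le_card_availableColours hC hA hB x₀)
    rw [availableColours, availableColours, hy₀ea, hy₀eb, hr]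
  · obtain ⟨c, hc⟩ : ∃ c, r x₀ c ≠ r y₀ c := by
      by_contra! h
      exact hr (Equiv.ext h)
    refine ⟨fun _ => c, fun fB => ?_⟩
    refine exists_isCycleColouring_of_distortion_ne hC hA hB hS hx₀ hgx hgxx hgx
      (hgxx.trans hy₀ea.symm) ?_
    rwa [precolouring_of_exists ⟨x₀, hx₀, hgxx.symm⟩]

theorem exists_extendable_precolouring (hC : 4 ≤ Fintype.card C)
    (hA : Set.BijOn ea M Set.univ) (hB : Set.BijOn eb M Set.univ)
    (hS : IsCycle ea eb S) (hSne : S.Nonempty) :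
    ∃ fA : E → C, ∀ fB : E → C, ∃ F, IsCycleColouring S (partner S ea) (partner S eb)
      (availableColours ea eb r M (precolouring S ea fA fB)) r F := by
  by_cases h : ∃ x₀ ∈ S, ea (partner S eb x₀) ≠ ea x₀
  · obtain ⟨x₀, hx₀, hne⟩ := h
    exact exists_extendable_precolouring_of_ea_ne hC hA hB hS hx₀ hne
  · push Not at h
    obtain ⟨x₀, hx₀⟩ := hSne
    exact exists_extendable_precolouring_of_ea_eq hC hA hB hS hx₀ h

end ExtendablePrecolouring

section Properness

variable {A B E C : Type*}

theorem distorted_ne_of_isCycleColouring {K D : Type*} {key : E → K} {τ : E → C → D}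
    {γ : E → E} {S : Finset E} {M : Set E} {F : E → C} (hM : Set.InjOn key M)
    (hγ : ∀ x ∈ S, ∀ y ∈ S, key y = key x → y = x ∨ y = γ x)
    (hcyc : ∀ x ∈ S, τ x (F x) ≠ τ (γ x) (F (γ x)))
    (hlist : ∀ x ∈ S, ∀ g ∈ M, key g = key x → τ x (F x) ≠ τ g (F g))
    {e g : E} (hne : e ≠ g) (he : e ∈ M ∨ e ∈ S) (hg : g ∈ M ∨ g ∈ S) (hkey : key e = key g) :
    τ e (F e) ≠ τ g (F g) := by
  rcases he with he | he <;> rcases hg with hg | hg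
  · exact absurd (hM he hg hkey) hne
  · exact (hlist g hg e he hkey).symm
  · exact hlist e he g hg hkey.symm
  · rcases hγ e he g hg hkey.symm with rfl | rfl
    · exact absurd rfl hne
    · exact hcyc e he

theorem piecewise_proper_of_isCycleColouring [DecidableEq A] [DecidableEq B] [Fintype C]
    {ea : E → A} {eb : E → B} {r : E → Equiv.Perm C} {M : Set E} {S : Finset E}
    [∀ x, Decidable (x ∈ S)] {F₀ Fc : E → C} (hA : Set.InjOn ea M) (hB : Set.InjOn eb M)
    (hSM : ∀ x ∈ S, x ∉ M) (hS : IsCycle ea eb S)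
    (hFc : IsCycleColouring S (partner S ea) (partner S eb) (availableColours ea eb r M F₀) r Fc)
    {e g : E} (hne : e ≠ g) (he : e ∈ M ∨ e ∈ S) (hg : g ∈ M ∨ g ∈ S) :
    (ea e = ea g → S.piecewise Fc F₀ e ≠ S.piecewise Fc F₀ g) ∧
      (eb e = eb g → r e (S.piecewise Fc F₀ e) ≠ r g (S.piecewise Fc F₀ g)) := by
  have hFS : ∀ x ∈ S, S.piecewise Fc F₀ x = Fc x := fun x hx => piecewise_eq_of_mem _ _ _ hx
  have hFM : ∀ g ∈ M, S.piecewise Fc F₀ g = F₀ g := fun g hg =>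
    piecewise_eq_of_notMem _ _ _ fun hgS => hSM g hgS hg
  have hlist : ∀ x ∈ S, ∀ g ∈ M, (ea g = ea x → S.piecewise Fc F₀ x ≠ S.piecewise Fc F₀ g) ∧
      (eb g = eb x → r x (S.piecewise Fc F₀ x) ≠ r g (S.piecewise Fc F₀ g)) := by
    intro x hx g hg
    rw [hFS x hx, hFM g hg]
    exact mem_availableColours.mp (hFc x hx).1 g hg
  refine ⟨distorted_ne_of_isCycleColouring (τ := fun _ => id) (F := S.piecewise Fc F₀) hA
    (fun x hx y hy => eq_or_eq_partner hS.regular_fst hx hy) (fun x hx => ?_)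
    (fun x hx g hg h => (hlist x hx g hg).1 h) hne he hg,
    distorted_ne_of_isCycleColouring (F := S.piecewise Fc F₀) hB
    (fun x hx y hy => eq_or_eq_partner hS.regular_snd hx hy)
    (fun x hx => ?_) (fun x hx g hg h => (hlist x hx g hg).2 h) hne he hg⟩
  · rw [hFS x hx, hFS _ (partner_spec hS.regular_fst hx).1]
    exact (hFc x hx).2.1
  · rw [hFS x hx, hFS _ (partner_spec hS.regular_snd hx).1]
    exact (hFc x hx).2.2

theorem bijOn_of_card_filter_eq_one [Fintype E] [DecidableEq A] {p : E → Prop} [DecidablePred p]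
    {f : E → A} (h : ∀ v, (univ.filter fun e => p e ∧ f e = v).card = 1) :
    Set.BijOn f {e | p e} Set.univ := by
  refine ⟨Set.mapsTo_univ _ _, fun a ha b hb hab => ?_, fun v _ => ?_⟩
  · exact card_le_one.mp (h (f a)).le a (by simp_all) b (by simp_all)
  · obtain ⟨g, hg⟩ := card_pos.mp (by rw [h v]; exact one_pos)
    exact ⟨g, by simp_all⟩

end Properness

end DistortionColouring

open DistortionColouring in
theorem stmt_12_general {A B E : Type} [Fintype E] [DecidableEq A] [DecidableEq B]
    (ea : E → A) (eb : E → B) (r : E → Equiv.Perm (Fin 4))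
    (m : E → Fin 3)
    (hmA : ∀ i : Fin 3, ∀ v : A,
      (Finset.univ.filter fun e => m e = i ∧ ea e = v).card = 1)
    (hmB : ∀ i : Fin 3, ∀ v : B,
      (Finset.univ.filter fun e => m e = i ∧ eb e = v).card = 1)
    (S : Finset E) (hSne : S.Nonempty)
    (hS2f : ∀ e ∈ S, m e ≠ 0)
    (hSregA : ∀ v : A, (∃ e ∈ S, ea e = v) →
      (S.filter fun e => ea e = v).card = 2)
    (hSregB : ∀ v : B, (∃ e ∈ S, eb e = v) →
      (S.filter fun e => eb e = v).card = 2)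
    (hSconn : ∀ e ∈ S, ∀ g ∈ S,
      Relation.ReflTransGen
        (fun x y => x ∈ S ∧ y ∈ S ∧ (ea x = ea y ∨ eb x = eb y)) e g) :
    ∃ fA : E → Fin 4, ∀ fB : E → Fin 4, ∃ F : E → Fin 4,
      (∀ e : E, (m e = 0 ∧ ∃ e' ∈ S, ea e' = ea e) → F e = fA e) ∧
      (∀ e : E, (m e = 0 ∧ ¬ (∃ e' ∈ S, ea e' = ea e) ∧ ∃ e' ∈ S, eb e' = eb e) →
        F e = fB e) ∧
      (∀ e g : E, e ≠ g →
        ((m e = 0 ∧ ((∃ e' ∈ S, ea e' = ea e) ∨ (∃ e' ∈ S, eb e' = eb e))) ∨ e ∈ S) →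
        ((m g = 0 ∧ ((∃ e' ∈ S, ea e' = ea g) ∨ (∃ e' ∈ S, eb e' = eb g))) ∨ g ∈ S) →
        (ea e = ea g → F e ≠ F g) ∧
        (eb e = eb g → r e (F e) ≠ r g (F g))) := by
  classical
  have hMA := bijOn_of_card_filter_eq_one (hmA 0)
  have hMB := bijOn_of_card_filter_eq_one (hmB 0)
  have hS : IsCycle ea eb S :=
    ⟨fun x hx => hSregA _ ⟨x, hx, rfl⟩, fun x hx => hSregB _ ⟨x, hx, rfl⟩, hSconn⟩
  obtain ⟨fA, hfA⟩ := exists_extendable_precolouring (r := r) (by simp) hMA hMB hS hSne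
  refine ⟨fA, fun fB => ?_⟩
  obtain ⟨Fc, hFc⟩ := hfA fB
  refine ⟨S.piecewise Fc (precolouring S ea fA fB), fun e ⟨he, heA⟩ => ?_,
    fun e ⟨he, heA, _⟩ => ?_, fun e g hne he hg => piecewise_proper_of_isCycleColouring
      hMA.injOn hMB.injOn hS2f hS hFc hne (he.imp And.left id) (hg.imp And.left id)⟩
  · rw [piecewise_eq_of_notMem _ _ _ fun h => hS2f e h he, precolouring_of_exists heA]
  · rw [piecewise_eq_of_notMem _ _ _ fun h => hS2f e h he, precolouring_of_not_exists heA]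

/-- The key claim (MA) of the proof: in a cubic bipartite multigraph decomposed
into three perfect matchings (colour classes of `m : E → Fin 3`; `M` is the
class `0`), for any cycle `S` of the 2-factor formed by the other two classes
there is a precolouring `fA` of the `M`-edges incident with the A-side of `S`
such that for every colouring `fB` of the remaining `M`-edges incident with the
B-side of `S`, the colouring extends to the edges of `S`, giving a proper
distortion-colouring of all these edges together. -/
theorem stmt_12 {A B E : Type} [Fintype E] [DecidableEq A] [DecidableEq B]
    (ea : E → A) (eb : E → B) (r : E → Equiv.Perm (Fin 4))
    (hA : ∀ v : A, (Finset.univ.filter fun e => ea e = v).card = 3)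
    (hB : ∀ v : B, (Finset.univ.filter fun e => eb e = v).card = 3)
    (m : E → Fin 3)
    (hmA : ∀ i : Fin 3, ∀ v : A,
      (Finset.univ.filter fun e => m e = i ∧ ea e = v).card = 1)
    (hmB : ∀ i : Fin 3, ∀ v : B,
      (Finset.univ.filter fun e => m e = i ∧ eb e = v).card = 1)
    (S : Finset E) (hSne : S.Nonempty)
    (hS2f : ∀ e ∈ S, m e ≠ 0)
    (hSregA : ∀ v : A, (∃ e ∈ S, ea e = v) →
      (S.filter fun e => ea e = v).card = 2)
    (hSregB : ∀ v : B, (∃ e ∈ S, eb e = v) →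
      (S.filter fun e => eb e = v).card = 2)
    (hSconn : ∀ e ∈ S, ∀ g ∈ S,
      Relation.ReflTransGen
        (fun x y => x ∈ S ∧ y ∈ S ∧ (ea x = ea y ∨ eb x = eb y)) e g) :
    ∃ fA : E → Fin 4, ∀ fB : E → Fin 4, ∃ F : E → Fin 4,
      (∀ e : E, (m e = 0 ∧ ∃ e' ∈ S, ea e' = ea e) → F e = fA e) ∧
      (∀ e : E, (m e = 0 ∧ ¬ (∃ e' ∈ S, ea e' = ea e) ∧ ∃ e' ∈ S, eb e' = eb e) →
        F e = fB e) ∧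
      (∀ e g : E, e ≠ g →
        ((m e = 0 ∧ ((∃ e' ∈ S, ea e' = ea e) ∨ (∃ e' ∈ S, eb e' = eb e))) ∨ e ∈ S) →
        ((m g = 0 ∧ ((∃ e' ∈ S, ea e' = ea g) ∨ (∃ e' ∈ S, eb e' = eb g))) ∨ g ∈ S) →
        (ea e = ea g → F e ≠ F g) ∧
        (eb e = eb g → r e (F e) ≠ r g (F g))) :=
  stmt_12_general ea eb r m hmA hmB S hSne hS2f hSregA hSregB hSconn
end
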